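/- arXiv:math/0209374 — 7 statements merged into one kernel-verified Lean document; each statement's English description precedes it below -/
import Mathlib

section
/- Let n ≥ 1 and let λ : ℝⁿ → ℝ be smooth. Define the n-ary bracket {h₁, …, hₙ}(x) := λ(x)·det[∂hᵢ/∂xⱼ(x)] on smooth functions. Then this bracket satisfies the Fundamental Identity of degree n: for all smooth functions f₁, …, f_{n−1}, g₁, …, gₙ : ℝⁿ → ℝ and all x ∈ ℝⁿ, {f₁, …, f_{n−1}, {g₁, …, gₙ}}(x) = Σ_{i=1}^{n} {g₁, …, g_{i−1}, {f₁, …, f_{n−1}, gᵢ}, g_{i+1}, …, gₙ}(x). (In other words, the Fundamental Identity is void for Nambu structures of top degree on ℝⁿ: every smooth top-degree multi-vector field λ·∂/∂x¹∧…∧∂/∂xⁿ defines a Nambu structure.) -/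
/-- The `n`-ary bracket on `ℝⁿ = Fin n → ℝ` determined by a function `l`:
`{h₁, …, hₙ}(x) = l(x) · det [∂hᵢ/∂xⱼ(x)]`. -/
noncomputable def nambuBracket (n : ℕ) (l : (Fin n → ℝ) → ℝ)
    (h : Fin n → ((Fin n → ℝ) → ℝ)) (x : Fin n → ℝ) : ℝ :=
  l x * (Matrix.of fun i j => fderiv ℝ (h i) x (Pi.single j 1)).det

open Matrix


noncomputable section FI_aux
variable {n : ℕ}

/-- determinant as a linear map in one row -/
noncomputable def detL (A : Matrix (Fin n) (Fin n) ℝ) (i : Fin n) : (Fin n → ℝ) →ₗ[ℝ] ℝ where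
  toFun c := (A.updateRow i c).det
  map_add' u v := Matrix.det_updateRow_add A i u v
  map_smul' s u := Matrix.det_updateRow_smul A i s u

lemma detL_apply (A : Matrix (Fin n) (Fin n) ℝ) (i : Fin n) (c) :
    detL A i c = (A.updateRow i c).det := rfl

lemma cramer_row_identity (A : Matrix (Fin n) (Fin n) ℝ) (u : Fin n → ℝ) :
    A.det • u = ∑ i, (A.updateRow i u).det • A i := by
  have h := Matrix.mulVec_cramer Aᵀ u
  rw [Matrix.det_transpose] at h
  funext p
  have h2 := congrFun h p
  simp only [Matrix.mulVec, dotProduct, Matrix.cramer_apply, Matrix.transpose_apply,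
    Pi.smul_apply, smul_eq_mul] at h2
  simp only [Pi.smul_apply, Finset.sum_apply, smul_eq_mul]
  rw [← h2]
  refine Finset.sum_congr rfl fun i _ => ?_
  rw [Matrix.updateCol_transpose, Matrix.det_transpose]
  ring

lemma lemC (A : Matrix (Fin n) (Fin n) ℝ) (ψ : (Fin n → ℝ) →ₗ[ℝ] ℝ) (u : Fin n → ℝ) :
    A.det * ψ u = ∑ i, (A.updateRow i u).det * ψ (A i) := by
  have h := congrArg ψ (cramer_row_identity A u)
  rw [LinearMap.map_smul, map_sum] at h
  simpa [smul_eq_mul] using h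

lemma basis_expand (ψ : (Fin n → ℝ) →ₗ[ℝ] ℝ) (c : Fin n → ℝ) :
    ψ c = ∑ k, c k * ψ (Pi.single k 1) := by
  have h := LinearMap.pi_apply_eq_sum_univ ψ c
  rw [h]
  refine Finset.sum_congr rfl fun k _ => ?_
  rw [smul_eq_mul]
  congr 2
  funext j
  simp [Pi.single_apply, eq_comm]

lemma lemS (H : Matrix (Fin n) (Fin n) ℝ) (hH : ∀ p q, H p q = H q p)
    (ψ χ : (Fin n → ℝ) →ₗ[ℝ] ℝ) :
    ψ (fun j => χ (H j)) = χ (fun j => ψ (H j)) := by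
  have e1 : ψ (fun j => χ (H j)) = ∑ k, ∑ q, H k q * χ (Pi.single q 1) * ψ (Pi.single k 1) := by
    rw [basis_expand ψ]
    refine Finset.sum_congr rfl fun k _ => ?_
    rw [basis_expand χ (H k), Finset.sum_mul]
  have e2 : χ (fun j => ψ (H j)) = ∑ k, ∑ q, H k q * ψ (Pi.single q 1) * χ (Pi.single k 1) := by
    rw [basis_expand χ]
    refine Finset.sum_congr rfl fun k _ => ?_
    rw [basis_expand ψ (H k), Finset.sum_mul]
  rw [e1, e2, Finset.sum_comm]
  refine Finset.sum_congr rfl fun k _ => Finset.sum_congr rfl fun q _ => ?_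
  rw [hH k q]; ring

lemma updateRow_comm' (M : Matrix (Fin n) (Fin n) ℝ) {r s : Fin n} (h : r ≠ s)
    (u v : Fin n → ℝ) :
    (M.updateRow r u).updateRow s v = (M.updateRow s v).updateRow r u := by
  ext i j
  rcases eq_or_ne i s with rfl | his
  · rw [Matrix.updateRow_self, Matrix.updateRow_ne h.symm, Matrix.updateRow_self]
  · rcases eq_or_ne i r with rfl | hir
    · rw [Matrix.updateRow_ne his, Matrix.updateRow_self, Matrix.updateRow_self]
    · rw [Matrix.updateRow_ne his, Matrix.updateRow_ne hir, Matrix.updateRow_ne hir,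
        Matrix.updateRow_ne his]

lemma updateRow_updateRow_same (M : Matrix (Fin n) (Fin n) ℝ) (i : Fin n) (u v : Fin n → ℝ) :
    (M.updateRow i u).updateRow i v = M.updateRow i v := by
  ext r j
  rcases eq_or_ne r i with rfl | hri
  · rw [Matrix.updateRow_self, Matrix.updateRow_self]
  · rw [Matrix.updateRow_ne hri, Matrix.updateRow_ne hri, Matrix.updateRow_ne hri]

lemma det_swap_rows (B : Matrix (Fin n) (Fin n) ℝ) {r s : Fin n} (h : r ≠ s)
    (c d : Fin n → ℝ) :
    ((B.updateRow r c).updateRow s d).det = -((B.updateRow r d).updateRow s c).det := by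
  have h0 : ∀ u : Fin n → ℝ, ((B.updateRow r u).updateRow s u).det = 0 := by
    intro u
    refine Matrix.det_zero_of_row_eq h ?_
    rw [Matrix.updateRow_ne h, Matrix.updateRow_self, Matrix.updateRow_self]
  have hsum := h0 (c + d)
  have e1 : ((B.updateRow r (c + d)).updateRow s (c + d)).det
      = (((B.updateRow r c).updateRow s c).det + ((B.updateRow r c).updateRow s d).det)
      + (((B.updateRow r d).updateRow s c).det + ((B.updateRow r d).updateRow s d).det) := by
    rw [updateRow_comm' B h, Matrix.det_updateRow_add,
      ← updateRow_comm' B h c (c + d), ← updateRow_comm' B h d (c + d),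
      Matrix.det_updateRow_add, Matrix.det_updateRow_add]
  rw [e1, h0 c, h0 d] at hsum
  linarith

lemma lem2 (A B : Matrix (Fin n) (Fin n) ℝ) {r s : Fin n} (hrs : r ≠ s)
    (K : Matrix (Fin n) (Fin n) ℝ) (hK : ∀ p q, K p q = K q p) :
    ∑ i, (A.updateRow i (fun p => ((B.updateRow r (K p)).updateRow s (A i)).det)).det = 0 := by
  have step1 : ∀ i : Fin n,
      (A.updateRow i (fun p => ((B.updateRow r (K p)).updateRow s (A i)).det)).det
      = ∑ p, ((B.updateRow r (K p)).updateRow s (A i)).det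
          * (A.updateRow i (Pi.single p 1)).det := by
    intro i
    rw [← detL_apply, basis_expand]
    exact Finset.sum_congr rfl fun p _ => by rw [detL_apply]
  have e1 : (∑ i, (A.updateRow i
        (fun p => ((B.updateRow r (K p)).updateRow s (A i)).det)).det)
      = A.det * ∑ p, ((B.updateRow r (K p)).updateRow s (Pi.single p 1)).det := by
    rw [Finset.mul_sum]
    calc (∑ i, (A.updateRow i
          (fun p => ((B.updateRow r (K p)).updateRow s (A i)).det)).det)
        = ∑ i, ∑ p, ((B.updateRow r (K p)).updateRow s (A i)).det
            * (A.updateRow i (Pi.single p 1)).det := Finset.sum_congr rfl fun i _ => step1 i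
      _ = ∑ p, ∑ i, ((B.updateRow r (K p)).updateRow s (A i)).det
            * (A.updateRow i (Pi.single p 1)).det := Finset.sum_comm
      _ = ∑ p, A.det * ((B.updateRow r (K p)).updateRow s (Pi.single p 1)).det := by
          refine Finset.sum_congr rfl fun p _ => ?_
          have h := lemC A (detL (B.updateRow r (K p)) s) (Pi.single p 1)
          simp only [detL_apply] at h
          rw [h]
          exact Finset.sum_congr rfl fun i _ => mul_comm _ _
  have e2 : ∀ p, ((B.updateRow r (K p)).updateRow s (Pi.single p 1)).det
      = ∑ q, K p q * ((B.updateRow r (Pi.single q 1)).updateRow s (Pi.single p 1)).det := by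
    intro p
    rw [updateRow_comm' B hrs, ← detL_apply, basis_expand]
    refine Finset.sum_congr rfl fun q _ => ?_
    rw [detL_apply, ← updateRow_comm' B hrs]
  have hanti : ∀ p q, ((B.updateRow r (Pi.single q 1)).updateRow s (Pi.single p 1)).det
      = -((B.updateRow r (Pi.single p 1)).updateRow s (Pi.single q 1)).det :=
    fun p q => det_swap_rows B hrs _ _
  set S : ℝ := ∑ p, ∑ q, K p q
      * ((B.updateRow r (Pi.single q 1)).updateRow s (Pi.single p 1)).det with hS
  have hSS : S = -S := by
    calc S = ∑ q, ∑ p, K p q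
          * ((B.updateRow r (Pi.single q 1)).updateRow s (Pi.single p 1)).det := by
          rw [hS]; exact Finset.sum_comm
      _ = ∑ p, ∑ q, -(K p q
          * ((B.updateRow r (Pi.single q 1)).updateRow s (Pi.single p 1)).det) := by
          refine Finset.sum_congr rfl fun p _ => Finset.sum_congr rfl fun q _ => ?_
          rw [hK q p, hanti q p]; ring
      _ = -S := by rw [hS, ← Finset.sum_neg_distrib]
                   exact Finset.sum_congr rfl fun p _ => by rw [← Finset.sum_neg_distrib]
  have hS0 : S = 0 := by linarith
  calc (∑ i, (A.updateRow i
        (fun p => ((B.updateRow r (K p)).updateRow s (A i)).det)).det)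
      = A.det * S := by
        rw [e1, hS]
        congr 1
        exact Finset.sum_congr rfl fun p _ => e2 p
    _ = 0 := by rw [hS0, mul_zero]
end FI_aux


noncomputable section FI_analysis
variable {n : ℕ}

/-- the Jacobian matrix of a family of functions -/
noncomputable def Dmat (h : Fin n → ((Fin n → ℝ) → ℝ)) (x : Fin n → ℝ) :
    Matrix (Fin n) (Fin n) ℝ :=
  Matrix.of fun i j => fderiv ℝ (h i) x (Pi.single j 1)

/-- determinant as a continuous multilinear map in the rows -/
noncomputable def detCM (n : ℕ) :
    ContinuousMultilinearMap ℝ (fun _ : Fin n => (Fin n → ℝ)) ℝ where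
  toMultilinearMap :=
    (Matrix.detRowAlternating : (Fin n → ℝ) [⋀^Fin n]→ₗ[ℝ] ℝ).toMultilinearMap
  cont := by
    show Continuous fun M : Matrix (Fin n) (Fin n) ℝ => M.det
    exact continuous_id.matrix_det

lemma detCM_apply (v : Fin n → (Fin n → ℝ)) : detCM n v = (Matrix.of v).det := rfl

lemma detCM_update (v : Fin n → (Fin n → ℝ)) (i : Fin n) (w : Fin n → ℝ) :
    detCM n (Function.update v i w) = ((Matrix.of v).updateRow i w).det := by
  have h : Matrix.of (Function.update v i w) = (Matrix.of v).updateRow i w := by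
    ext r j
    by_cases hri : r = i
    · subst hri; simp [Matrix.updateRow_self]
    · simp [Matrix.updateRow_ne hri, Function.update_of_ne hri]
  rw [detCM_apply, h]

lemma row_hasFDerivAt {c : (Fin n → ℝ) → ℝ} (hc : ContDiff ℝ (⊤ : ℕ∞) c) (x : Fin n → ℝ) :
    HasFDerivAt (fun y => (fun j => fderiv ℝ c y (Pi.single j 1)))
      ((ContinuousLinearMap.pi fun j : Fin n =>
          ContinuousLinearMap.apply ℝ ℝ (Pi.single j 1)).comp
        (fderiv ℝ (fderiv ℝ c) x)) x := by
  have h1 : HasFDerivAt (fderiv ℝ c) (fderiv ℝ (fderiv ℝ c) x) x :=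
    (((hc.fderiv_right (m := (⊤ : ℕ∞)) (by simp)).differentiable (by simp)) x).hasFDerivAt
  exact ((ContinuousLinearMap.pi fun j : Fin n =>
    ContinuousLinearMap.apply ℝ ℝ (Pi.single j 1)).hasFDerivAt).comp x h1

lemma fderiv_bracket_apply {l : (Fin n → ℝ) → ℝ} (hl : ContDiff ℝ (⊤ : ℕ∞) l)
    {h : Fin n → ((Fin n → ℝ) → ℝ)} (hh : ∀ i, ContDiff ℝ (⊤ : ℕ∞) (h i))
    (x u : Fin n → ℝ) :
    fderiv ℝ (nambuBracket n l h) x u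
      = fderiv ℝ l x u * (Dmat h x).det
        + l x * ∑ i, ((Dmat h x).updateRow i
            (fun k => fderiv ℝ (fderiv ℝ (h i)) x u (Pi.single k 1))).det := by
  classical
  have hrows : ∀ i : Fin n, HasFDerivAt
      (fun y => (fun j => fderiv ℝ (h i) y (Pi.single j 1)))
      ((ContinuousLinearMap.pi fun j : Fin n =>
          ContinuousLinearMap.apply ℝ ℝ (Pi.single j 1)).comp
        (fderiv ℝ (fderiv ℝ (h i)) x)) x := fun i => row_hasFDerivAt (hh i) x
  have hdet := HasFDerivAt.multilinear_comp (f := detCM n) hrows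
  have hlx : HasFDerivAt l (fderiv ℝ l x) x := ((hl.differentiable (by simp)) x).hasFDerivAt
  have hmul := hlx.mul hdet
  have hnb : HasFDerivAt (nambuBracket n l h)
      (l x • (∑ i, ((detCM n).toContinuousLinearMap
            (fun i => fun j => fderiv ℝ (h i) x (Pi.single j 1)) i).comp
          ((ContinuousLinearMap.pi fun j : Fin n =>
              ContinuousLinearMap.apply ℝ ℝ (Pi.single j 1)).comp
            (fderiv ℝ (fderiv ℝ (h i)) x)))
        + detCM n (fun i => fun j => fderiv ℝ (h i) x (Pi.single j 1)) • fderiv ℝ l x) x := hmul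
  rw [hnb.fderiv]
  simp only [ContinuousLinearMap.add_apply, ContinuousLinearMap.coe_smul', Pi.smul_apply,
    ContinuousLinearMap.sum_apply, ContinuousLinearMap.comp_apply,
    ContinuousLinearMap.pi_apply, ContinuousLinearMap.apply_apply, smul_eq_mul,
    ContinuousMultilinearMap.toContinuousLinearMap_apply]
  rw [add_comm]
  have hD : (Matrix.of fun i j => fderiv ℝ (h i) x (Pi.single j 1)) = Dmat h x := rfl
  have e2 : ∀ i : Fin n, detCM n
      (Function.update (fun i' j => fderiv ℝ (h i') x (Pi.single j 1)) i
        ((ContinuousLinearMap.pi fun j : Fin n =>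
          ContinuousLinearMap.apply ℝ ℝ (Pi.single j 1))
            ((fderiv ℝ (fderiv ℝ (h i)) x) u)))
      = ((Dmat h x).updateRow i
          fun k => fderiv ℝ (fderiv ℝ (h i)) x u (Pi.single k 1)).det := by
    intro i
    have hw : (ContinuousLinearMap.pi fun j : Fin n =>
        ContinuousLinearMap.apply ℝ ℝ (Pi.single j 1)) ((fderiv ℝ (fderiv ℝ (h i)) x) u)
        = fun k => fderiv ℝ (fderiv ℝ (h i)) x u (Pi.single k 1) := by
      funext k
      simp
    rw [detCM_update, hw, hD]
  rw [Finset.sum_congr rfl fun i _ => e2 i, detCM_apply, hD]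
  ring
end FI_analysis


/-- for any smooth `l : ℝⁿ → ℝ` (with `n = m + 1 ≥ 1`), the bracket
`{h₁, …, hₙ} = l · det [∂hᵢ/∂xⱼ]` satisfies the Fundamental Identity of degree `n`:
the Fundamental Identity is void for Nambu structures of top degree on `ℝⁿ`. -/
theorem fundamentalIdentity_top_degree (m : ℕ) (l : (Fin (m + 1) → ℝ) → ℝ)
    (hl : ContDiff ℝ (⊤ : ℕ∞) l)
    (f : Fin m → ((Fin (m + 1) → ℝ) → ℝ))
    (g : Fin (m + 1) → ((Fin (m + 1) → ℝ) → ℝ))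
    (hf : ∀ i, ContDiff ℝ (⊤ : ℕ∞) (f i)) (hg : ∀ i, ContDiff ℝ (⊤ : ℕ∞) (g i))
    (x : Fin (m + 1) → ℝ) :
    nambuBracket (m + 1) l (Fin.snoc f (nambuBracket (m + 1) l g)) x =
      ∑ i : Fin (m + 1),
        nambuBracket (m + 1) l
          (Function.update g i (nambuBracket (m + 1) l (Fin.snoc f (g i)))) x := by
  classical
  set A : Matrix (Fin (m + 1)) (Fin (m + 1)) ℝ := Dmat g x with hA
  set b : Fin m → (Fin (m + 1) → ℝ) :=
    (fun r j => fderiv ℝ (f r) x (Pi.single j 1)) with hb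
  set B0 : Matrix (Fin (m + 1)) (Fin (m + 1)) ℝ :=
    Matrix.of (Fin.snoc b (0 : Fin (m + 1) → ℝ)) with hB0
  set φ : (Fin (m + 1) → ℝ) →ₗ[ℝ] ℝ := detL B0 (Fin.last m) with hφ
  set dl : Fin (m + 1) → ℝ := (fun j => fderiv ℝ l x (Pi.single j 1)) with hdl
  set Hs : Fin (m + 1) → Fin (m + 1) → Fin (m + 1) → ℝ :=
    (fun i j k =>
      fderiv ℝ (fderiv ℝ (g i)) x (Pi.single j 1) (Pi.single k 1)) with hHs
  set Ks : Fin m → Fin (m + 1) → Fin (m + 1) → ℝ :=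
    (fun r j k =>
      fderiv ℝ (fderiv ℝ (f r)) x (Pi.single j 1) (Pi.single k 1)) with hKs
  -- symmetry of Hessians
  have hHsym : ∀ i p q, Hs i p q = Hs i q p := by
    intro i p q
    simp only [hHs]
    exact ((hg i).contDiffAt.isSymmSndFDerivAt (by rw [minSmoothness_of_isRCLikeNormedField]; exact WithTop.coe_le_coe.mpr (le_top : (2 : ℕ∞) ≤ ⊤))) _ _
  have hKsym : ∀ r p q, Ks r p q = Ks r q p := by
    intro r p q
    simp only [hKs]
    exact ((hf r).contDiffAt.isSymmSndFDerivAt (by rw [minSmoothness_of_isRCLikeNormedField]; exact WithTop.coe_le_coe.mpr (le_top : (2 : ℕ∞) ≤ ⊤))) _ _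
  -- smoothness of snoc families
  have hsnoc : ∀ (c : (Fin (m + 1) → ℝ) → ℝ), ContDiff ℝ (⊤ : ℕ∞) c →
      ∀ r, ContDiff ℝ (⊤ : ℕ∞) ((Fin.snoc f c : Fin (m + 1) → ((Fin (m + 1) → ℝ) → ℝ)) r) := by
    intro c hc r
    refine Fin.lastCases ?_ (fun r' => ?_) r
    · rw [Fin.snoc_last]; exact hc
    · rw [Fin.snoc_castSucc]; exact hf r'
  -- matrix description lemmas
  have hofB : ∀ c : Fin (m + 1) → ℝ,
      Matrix.of (Fin.snoc b c) = B0.updateRow (Fin.last m) c := by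
    intro c
    have h1 : B0.updateRow (Fin.last m) c
        = Matrix.of (Function.update (Fin.snoc b 0) (Fin.last m) c) := by
      ext r j
      rw [Matrix.updateRow_apply, Matrix.of_apply, Function.update_apply, hB0]
      split_ifs <;> rfl
    rw [h1, Fin.update_snoc_last]
  have hDmat_snoc : ∀ (c : (Fin (m + 1) → ℝ) → ℝ),
      Dmat (Fin.snoc f c) x
        = B0.updateRow (Fin.last m) (fun j => fderiv ℝ c x (Pi.single j 1)) := by
    intro c
    rw [← hofB]
    ext i j
    refine Fin.lastCases ?_ (fun r => ?_) i
    · simp only [Dmat, Matrix.of_apply, Fin.snoc_last]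
    · simp only [Dmat, Matrix.of_apply, Fin.snoc_castSucc, hb]
  have hDmat_upd : ∀ (i : Fin (m + 1)) (c : (Fin (m + 1) → ℝ) → ℝ),
      Dmat (Function.update g i c) x
        = A.updateRow i (fun j => fderiv ℝ c x (Pi.single j 1)) := by
    intro i c
    ext r j
    rcases eq_or_ne r i with rfl | hri
    · simp only [Dmat, Matrix.of_apply, Function.update_self, Matrix.updateRow_self]
    · simp only [Dmat, Matrix.of_apply, Function.update_of_ne hri,
        Matrix.updateRow_ne hri, hA]
  have hrowA : ∀ i, A i = fun j => fderiv ℝ (g i) x (Pi.single j 1) := fun i => rfl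
  -- LHS
  have hLHS : nambuBracket (m + 1) l (Fin.snoc f (nambuBracket (m + 1) l g)) x
      = l x * (A.det * φ dl
          + l x * ∑ i, φ (fun j => detL A i (Hs i j))) := by
    have h1 : nambuBracket (m + 1) l (Fin.snoc f (nambuBracket (m + 1) l g)) x
        = l x * φ (fun j => fderiv ℝ (nambuBracket (m + 1) l g) x (Pi.single j 1)) := by
      show l x * (Dmat (Fin.snoc f (nambuBracket (m + 1) l g)) x).det = _
      rw [hDmat_snoc, ← detL_apply, hφ]
    have h2 : (fun j => fderiv ℝ (nambuBracket (m + 1) l g) x (Pi.single j 1))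
        = A.det • dl + l x • ∑ i, (fun j => detL A i (Hs i j)) := by
      funext j
      simp only [Pi.add_apply, Pi.smul_apply, Finset.sum_apply, smul_eq_mul,
        hA, hdl, hHs, detL_apply]
      rw [fderiv_bracket_apply hl hg x (Pi.single j 1)]
      ring
    rw [h1, h2, map_add, _root_.map_smul, _root_.map_smul, map_sum, smul_eq_mul, smul_eq_mul]
  -- RHS terms
  have hterm : ∀ i, nambuBracket (m + 1) l
        (Function.update g i (nambuBracket (m + 1) l (Fin.snoc f (g i)))) x
      = l x * (φ (A i) * detL A i dl
          + l x * (detL A i (fun j => φ (Hs i j))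
            + ∑ r : Fin m, detL A i (fun j =>
                ((B0.updateRow (Fin.castSucc r) (Ks r j)).updateRow
                  (Fin.last m) (A i)).det))) := by
    intro i
    have h1 : nambuBracket (m + 1) l
          (Function.update g i (nambuBracket (m + 1) l (Fin.snoc f (g i)))) x
        = l x * detL A i (fun j =>
            fderiv ℝ (nambuBracket (m + 1) l (Fin.snoc f (g i))) x (Pi.single j 1)) := by
      show l x * (Dmat (Function.update g i
          (nambuBracket (m + 1) l (Fin.snoc f (g i)))) x).det = _
      rw [hDmat_upd, detL_apply]
    have h2 : (fun j =>
          fderiv ℝ (nambuBracket (m + 1) l (Fin.snoc f (g i))) x (Pi.single j 1))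
        = φ (A i) • dl + l x • ((fun j => φ (Hs i j))
            + ∑ r : Fin m, (fun j =>
                ((B0.updateRow (Fin.castSucc r) (Ks r j)).updateRow
                  (Fin.last m) (A i)).det)) := by
      funext j
      rw [fderiv_bracket_apply hl (hsnoc (g i) (hg i)) x (Pi.single j 1),
        hDmat_snoc (g i), Fin.sum_univ_castSucc]
      simp only [Pi.add_apply, Pi.smul_apply, Finset.sum_apply, smul_eq_mul]
      simp only [Fin.snoc_castSucc, Fin.snoc_last]
      simp only [hφ, detL_apply, hdl, hHs, hKs, hA]
      simp only [updateRow_updateRow_same]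
      have hAfun : Dmat g x i = fun j' => fderiv ℝ (g i) x (Pi.single j' 1) := rfl
      simp only [← hAfun]
      have hcomm : ∀ r : Fin m,
          ((B0.updateRow (Fin.castSucc r) (fun k =>
              fderiv ℝ (fderiv ℝ (f r)) x (Pi.single j 1) (Pi.single k 1))).updateRow
            (Fin.last m) (Dmat g x i))
          = ((B0.updateRow (Fin.last m) (Dmat g x i)).updateRow (Fin.castSucc r)
              (fun k => fderiv ℝ (fderiv ℝ (f r)) x (Pi.single j 1) (Pi.single k 1))) :=
        fun r => updateRow_comm' B0 (Fin.castSucc_lt_last r).ne _ _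
      simp only [hcomm]
      ring
    rw [h1, h2, map_add, _root_.map_smul, _root_.map_smul, map_add, map_sum, smul_eq_mul, smul_eq_mul]
  -- the three algebraic identities
  have hC : A.det * φ dl = ∑ i, detL A i dl * φ (A i) := by
    rw [lemC A φ dl]
    exact Finset.sum_congr rfl fun i _ => by rw [← detL_apply]
  have h1id : ∀ i, φ (fun j => detL A i (Hs i j)) = detL A i (fun j => φ (Hs i j)) :=
    fun i => lemS (Hs i) (hHsym i) φ (detL A i)
  have h2id : ∀ r : Fin m, (∑ i, detL A i (fun j =>
      ((B0.updateRow (Fin.castSucc r) (Ks r j)).updateRow (Fin.last m) (A i)).det)) = 0 := by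
    intro r
    have h := lem2 A B0 (Fin.castSucc_lt_last r).ne (Ks r) (hKsym r)
    rw [← h]
    exact Finset.sum_congr rfl fun i _ => by rw [detL_apply]
  -- final assembly
  rw [hLHS, Finset.sum_congr rfl fun i _ => hterm i, hC]
  have hsum2 : (∑ i, l x * (φ (A i) * detL A i dl
        + l x * (detL A i (fun j => φ (Hs i j))
          + ∑ r : Fin m, detL A i (fun j =>
              ((B0.updateRow (Fin.castSucc r) (Ks r j)).updateRow
                (Fin.last m) (A i)).det))))
      = (∑ i, l x * (φ (A i) * detL A i dl
          + l x * detL A i (fun j => φ (Hs i j))))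
        + ∑ i, ∑ r : Fin m, l x * l x * detL A i (fun j =>
            ((B0.updateRow (Fin.castSucc r) (Ks r j)).updateRow
              (Fin.last m) (A i)).det) := by
    rw [← Finset.sum_add_distrib]
    refine Finset.sum_congr rfl fun i _ => ?_
    rw [← Finset.mul_sum]
    ring
  have hzero : (∑ i, ∑ r : Fin m, l x * l x * detL A i (fun j =>
      ((B0.updateRow (Fin.castSucc r) (Ks r j)).updateRow
        (Fin.last m) (A i)).det)) = 0 := by
    rw [Finset.sum_comm]
    refine Finset.sum_eq_zero fun r _ => ?_
    rw [← Finset.mul_sum, h2id r, mul_zero]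
  rw [hsum2, hzero, add_zero]
  simp only [h1id, mul_add, Finset.mul_sum, Finset.sum_add_distrib]
  congr 1
  exact Finset.sum_congr rfl fun i _ => by ring
end

section
/- Let n ≥ 2, let λ : ℝⁿ → ℝ be smooth and let f : ℝⁿ → ℝ be smooth. Define the (n−1)-ary bracket {g₁, …, g_{n−1}}_f (x) := λ(x)·det[Jac(f, g₁, …, g_{n−1})(x)], the determinant of the n×n Jacobian matrix at x of the n-tuple of functions (f, g₁, …, g_{n−1}), multiplied by λ(x). Then this bracket satisfies the Fundamental Identity of degree n−1: for all smooth functions f₁, …, f_{n−2}, g₁, …, g_{n−1} : ℝⁿ → ℝ, {f₁, …, f_{n−2}, {g₁, …, g_{n−1}}_f}_f = Σ_{i=1}^{n−1} {g₁, …, g_{i−1}, {f₁, …, f_{n−2}, gᵢ}_f, g_{i+1}, …, g_{n−1}}_f. (This is the instance on ℝⁿ of Proposition 1: the contraction i_{df}Λ of a top-degree Nambu structure Λ with an exact 1-form df is again a Nambu structure.) -/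
/-- The `(n-1)`-ary bracket on `ℝⁿ = Fin n → ℝ` (with `n = m + 2 ≥ 2`) obtained by
contracting the top-degree Nambu structure `l · ∂/∂x¹ ∧ ⋯ ∧ ∂/∂xⁿ` with `df`:
`{g₁, …, g_{n-1}}_f (x) = l(x) · det [Jac(f, g₁, …, g_{n-1})(x)]`. -/
noncomputable def contractedBracket (m : ℕ) (l f : (Fin (m + 2) → ℝ) → ℝ)
    (g : Fin (m + 1) → ((Fin (m + 2) → ℝ) → ℝ)) (x : Fin (m + 2) → ℝ) : ℝ :=
  l x * (Matrix.of fun i j => fderiv ℝ ((Fin.cons f g : Fin (m + 2) → (Fin (m + 2) → ℝ) → ℝ) i) x (Pi.single j 1)).det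

noncomputable section
namespace NambuFI
variable {n : ℕ}
abbrev E (n : ℕ) := Fin n → ℝ

/-- determinant as a continuous multilinear map in the rows -/
def detC (n : ℕ) : ContinuousMultilinearMap ℝ (fun _ : Fin n => (Fin n → ℝ)) ℝ :=
  ∑ σ : Equiv.Perm (Fin n), ((Equiv.Perm.sign σ : ℤ) : ℝ) •
    (ContinuousMultilinearMap.mkPiAlgebra ℝ (Fin n) ℝ).compContinuousLinearMap
      (fun i => ContinuousLinearMap.proj (σ i))

lemma detC_apply (v : Fin n → Fin n → ℝ) : detC n v = (Matrix.of v).det := by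
  rw [← Matrix.det_transpose, Matrix.det_apply']
  simp [detC, Matrix.transpose_apply]

/-- the gradient vector -/
def gradv (h : E n → ℝ) (x : E n) : E n := fun j => fderiv ℝ h x (Pi.single j 1)

/-- evaluation of a continuous linear functional on the basis, as a continuous linear map -/
def evalL (n : ℕ) : (E n →L[ℝ] ℝ) →L[ℝ] E n :=
  ContinuousLinearMap.pi fun j => ContinuousLinearMap.apply ℝ ℝ (Pi.single j 1)

lemma gradv_eq (h : E n → ℝ) : gradv h = fun x => evalL n (fderiv ℝ h x) := rfl

lemma contDiff_gradv {h : E n → ℝ} (hh : ContDiff ℝ (⊤ : ℕ∞) h) : ContDiff ℝ (⊤ : ℕ∞) (gradv h) := by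
  rw [gradv_eq]
  exact (evalL n).contDiff.comp (hh.fderiv_right (by simp))

lemma hasFDerivAt_gradv {h : E n → ℝ} (hh : ContDiff ℝ (⊤ : ℕ∞) h) (x : E n) :
    HasFDerivAt (gradv h) (fderiv ℝ (gradv h) x) x :=
  ((contDiff_gradv hh).differentiable (by simp) x).hasFDerivAt

/-- symmetry of the Hessian -/
lemma hess_symm {h : E n → ℝ} (hh : ContDiff ℝ (⊤ : ℕ∞) h) (x : E n) (k j : Fin n) :
    fderiv ℝ (gradv h) x (Pi.single k 1) j = fderiv ℝ (gradv h) x (Pi.single j 1) k := by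
  have hd : ∀ y, HasFDerivAt h (fderiv ℝ h y) y :=
    fun y => (hh.differentiable (by simp) y).hasFDerivAt
  have hd2 : HasFDerivAt (fderiv ℝ h) (fderiv ℝ (fun y => fderiv ℝ h y) x) x :=
    (((hh.fderiv_right (m := (⊤ : ℕ∞)) (by simp)).differentiable (by simp)) x).hasFDerivAt
  have hsymm := second_derivative_symmetric hd hd2 (Pi.single k 1) (Pi.single j 1)
  have hL : ∀ y, gradv h y = evalL n (fderiv ℝ h y) := fun _ => rfl
  have : fderiv ℝ (gradv h) x = (evalL n).comp (fderiv ℝ (fderiv ℝ h) x) := by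
    rw [gradv_eq]
    exact (((evalL n).hasFDerivAt).comp x hd2).fderiv
  rw [this]
  simpa [evalL] using (second_derivative_symmetric hd hd2 (Pi.single j 1) (Pi.single k 1)).symm

/-- rows of the Jacobian -/
def rowsf (u : Fin n → (E n → ℝ)) (y : E n) : Fin n → E n := fun i => gradv (u i) y

def Q (l : E n → ℝ) (u : Fin n → (E n → ℝ)) (y : E n) : ℝ := l y * detC n (rowsf u y)

theorem contDiff_Q {l : E n → ℝ} {u : Fin n → (E n → ℝ)} (hl : ContDiff ℝ (⊤ : ℕ∞) l)
    (hu : ∀ i, ContDiff ℝ (⊤ : ℕ∞) (u i)) : ContDiff ℝ (⊤ : ℕ∞) (Q l u) := by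
  refine hl.mul ?_
  exact (detC n).contDiff.comp (contDiff_pi.2 fun i => contDiff_gradv (hu i))


theorem hasFDerivAt_detRows {u : Fin n → (E n → ℝ)} (hu : ∀ i, ContDiff ℝ (⊤ : ℕ∞) (u i)) (x : E n) :
    HasFDerivAt (fun y => detC n (rowsf u y))
      (∑ i : Fin n, ((detC n).toContinuousLinearMap (rowsf u x) i) ∘L
        (fderiv ℝ (gradv (u i)) x)) x :=
  HasFDerivAt.multilinear_comp (detC n) (fun i => hasFDerivAt_gradv (hu i) x)

theorem gradv_Q {l : E n → ℝ} {u : Fin n → (E n → ℝ)} (hl : ContDiff ℝ (⊤ : ℕ∞) l)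
    (hu : ∀ i, ContDiff ℝ (⊤ : ℕ∞) (u i)) (x : E n) (k : Fin n) :
    gradv (Q l u) x k = gradv l x k * detC n (rowsf u x)
      + l x * ∑ i : Fin n, detC n (Function.update (rowsf u x) i
          (fderiv ℝ (gradv (u i)) x (Pi.single k 1))) := by
  have hld : HasFDerivAt l (fderiv ℝ l x) x := (hl.differentiable (by simp) x).hasFDerivAt
  have hQ : HasFDerivAt (Q l u)
      ((l x) • (∑ i : Fin n, ((detC n).toContinuousLinearMap (rowsf u x) i) ∘L
        (fderiv ℝ (gradv (u i)) x)) + (detC n (rowsf u x)) • fderiv ℝ l x) x :=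
    hld.mul (hasFDerivAt_detRows hu x)
  have : gradv (Q l u) x k = fderiv ℝ (Q l u) x (Pi.single k 1) := rfl
  rw [this, hQ.fderiv]
  simp [Finset.mul_sum]
  rw [add_comm, mul_comm]
  rfl

lemma detC_eq_detRowAlternating (v : Fin n → E n) :
    detC n v = Matrix.detRowAlternating (R := ℝ) (n := Fin n) v := detC_apply v

lemma detC_update_linear (w : Fin n → E n) (i : Fin n) (v : E n) :
    detC n (Function.update w i v) = ∑ k, v k * detC n (Function.update w i (Pi.single k 1)) := by
  conv_lhs => rw [← Finset.univ_sum_single v]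
  erw [(detC n).toMultilinearMap.map_update_sum Finset.univ i (fun k => Pi.single k (v k)) w]
  refine Finset.sum_congr rfl fun k _ => ?_
  have : Pi.single k (v k) = (v k) • (Pi.single k 1 : E n) := by
    simp [Pi.single_apply, funext_iff, mul_comm]
  rw [this]
  simpa using (detC n).toMultilinearMap.map_update_smul w i (v k) (Pi.single k 1)

lemma detC_eq_zero_of_eq (v : Fin n → E n) {i j : Fin n} (h : v i = v j) (hij : i ≠ j) :
    detC n v = 0 := by
  rw [detC_eq_detRowAlternating]
  exact AlternatingMap.map_eq_zero_of_eq _ v h hij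

lemma detC_swap (v : Fin n → E n) {i j : Fin n} (hij : i ≠ j) :
    detC n (v ∘ Equiv.swap i j) = - detC n v := by
  rw [detC_eq_detRowAlternating, detC_eq_detRowAlternating]
  exact AlternatingMap.map_swap _ v hij

lemma sum_detC_update_mul (R : Fin n → E n) (v : E n) (k : Fin n) :
    ∑ i, detC n (Function.update R i v) * R i k = v k * detC n R := by
  have h1 : ∀ i, detC n (Function.update R i v)
      = ∑ j, v j * (Matrix.of R).adjugate j i := by
    intro i
    rw [detC_update_linear]
    refine Finset.sum_congr rfl fun j _ => ?_
    rw [Matrix.adjugate_apply, detC_apply]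
    rfl
  calc ∑ i, detC n (Function.update R i v) * R i k
      = ∑ i, ∑ j, v j * ((Matrix.of R).adjugate j i * R i k) := by
        refine Finset.sum_congr rfl fun i _ => ?_
        rw [h1, Finset.sum_mul]; exact Finset.sum_congr rfl fun j _ => by ring
    _ = ∑ j, ∑ i, v j * ((Matrix.of R).adjugate j i * R i k) := Finset.sum_comm
    _ = ∑ j, v j * ((Matrix.of R).adjugate * Matrix.of R) j k := by
        refine Finset.sum_congr rfl fun j _ => ?_
        rw [← Finset.mul_sum, Matrix.mul_apply]
        rfl
    _ = v k * detC n R := by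
        rw [Matrix.adjugate_mul, detC_apply]
        simp [Matrix.smul_apply, Matrix.one_apply, mul_ite, mul_comm]

section Main
variable {N : ℕ} (l : E (N+1) → ℝ) (a : Fin N → (E (N+1) → ℝ))

/-- the `(N)`-ary operator `P h = l · det(rows: ∇a₁ … ∇a_N, ∇h)` -/
def P (h : E (N+1) → ℝ) : E (N+1) → ℝ := Q l (Fin.snoc a h)

/-- cofactor minor determinants -/
def Mfun (k : Fin (N+1)) (y : E (N+1)) : ℝ :=
  detC (N+1) (Fin.snoc (fun p => gradv (a p) y) (Pi.single k 1))

/-- coefficients of the first-order operator `P` -/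
def cfun (k : Fin (N+1)) (y : E (N+1)) : ℝ := l y * Mfun a k y

lemma rowsf_snoc (h : E (N+1) → ℝ) (y : E (N+1)) :
    rowsf (Fin.snoc a h) y = Fin.snoc (fun p => gradv (a p) y) (gradv h y) := by
  funext i
  refine Fin.lastCases ?_ (fun p => ?_) i <;> simp [rowsf]

/-- Sublemma A : `P` is a first-order differential operator with coefficients `cfun` -/
lemma P_eq_sum (h : E (N+1) → ℝ) (y : E (N+1)) :
    P l a h y = ∑ k, cfun l a k y * gradv h y k := by
  have h1 : Fin.snoc (fun p => gradv (a p) y) (gradv h y)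
      = Function.update (Fin.snoc (fun p => gradv (a p) y) 0 : Fin (N+1) → E (N+1)) (Fin.last N) (gradv h y) :=
    (Fin.update_snoc_last _ _ _).symm
  have h2 : ∀ k : Fin (N+1), Function.update
      (Fin.snoc (fun p => gradv (a p) y) 0 : Fin (N+1) → E (N+1)) (Fin.last N) (Pi.single k 1)
      = Fin.snoc (fun p => gradv (a p) y) (Pi.single k 1) := fun k => Fin.update_snoc_last _ _ _
  rw [P, Q, rowsf_snoc, h1, detC_update_linear, Finset.mul_sum]
  refine Finset.sum_congr rfl fun k _ => ?_
  rw [h2]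
  simp [cfun, Mfun]
  ring
end Main

section Main2
variable {N : ℕ} {l : E (N+1) → ℝ} {a : Fin N → (E (N+1) → ℝ)}

lemma contDiff_Mfun (ha : ∀ p, ContDiff ℝ (⊤ : ℕ∞) (a p)) (k : Fin (N+1)) : ContDiff ℝ (⊤ : ℕ∞) (Mfun a k) := by
  have : Mfun a k = fun y => detC (N+1)
      (fun i => (Fin.snoc (fun p => gradv (a p)) (fun _ => Pi.single k 1) :
        Fin (N+1) → (E (N+1) → E (N+1))) i y) := by
    funext y
    unfold Mfun
    congr 1
    funext i
    refine Fin.lastCases ?_ (fun p => ?_) i <;> simp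
  rw [this]
  refine (detC (N + 1)).contDiff.comp (contDiff_pi.2 fun i => ?_)
  refine Fin.lastCases ?_ (fun p => ?_) i
  · simpa using contDiff_const
  · simpa using contDiff_gradv (ha p)

lemma gradv_Mfun (ha : ∀ p, ContDiff ℝ (⊤ : ℕ∞) (a p)) (x : E (N+1)) (k k' : Fin (N+1)) :
    gradv (Mfun a k) x k' = ∑ p : Fin N,
      detC (N+1) (Function.update
        (Fin.snoc (fun p => gradv (a p) x) (Pi.single k 1) : Fin (N+1) → E (N+1))
        (Fin.castSucc p) (fderiv ℝ (gradv (a p)) x (Pi.single k' 1))) := by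
  classical
  set v : Fin (N+1) → (E (N+1) → E (N+1)) :=
    Fin.snoc (fun p => gradv (a p)) (fun _ => Pi.single k 1) with hv
  set v' : Fin (N+1) → (E (N+1) →L[ℝ] E (N+1)) :=
    Fin.snoc (fun p => fderiv ℝ (gradv (a p)) x) 0 with hv'
  have hrows : ∀ y, (fun i => v i y) =
      (Fin.snoc (fun p => gradv (a p) y) (Pi.single k 1) : Fin (N+1) → E (N+1)) := by
    intro y; funext i
    refine Fin.lastCases ?_ (fun p => ?_) i <;> simp [hv]
  have hder : ∀ i, HasFDerivAt (v i) (v' i) x := by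
    intro i
    refine Fin.lastCases ?_ (fun p => ?_) i
    · simpa [hv, hv'] using hasFDerivAt_const (𝕜 := ℝ) (Pi.single k 1 : E (N+1)) x
    · simpa [hv, hv'] using hasFDerivAt_gradv (ha p) x
  have hM : Mfun a k = fun y => detC (N+1) (fun i => v i y) := by
    funext y; rw [hrows]; rfl
  have hD := HasFDerivAt.multilinear_comp (detC (N+1)) hder
  have : gradv (Mfun a k) x k' = fderiv ℝ (Mfun a k) x (Pi.single k' 1) := rfl
  rw [this, hM, hD.fderiv]
  rw [ContinuousLinearMap.sum_apply]
  rw [Fin.sum_univ_castSucc]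
  have hlast : ((detC (N+1)).toContinuousLinearMap (fun j => v j x) (Fin.last N) ∘L
      v' (Fin.last N)) (Pi.single k' 1) = 0 := by
    have : v' (Fin.last N) = 0 := by simp [hv']
    simp [this]
  rw [hlast, add_zero]
  refine Finset.sum_congr rfl fun p _ => ?_
  simp only [ContinuousLinearMap.comp_apply, ContinuousMultilinearMap.toContinuousLinearMap_apply]
  rw [hrows x]
  congr 2
  simp [hv']
end Main2

section Piola
variable {N : ℕ} {l : E (N+1) → ℝ} {a : Fin N → (E (N+1) → ℝ)}

/-- the Piola identity: the cofactor vector field is divergence free -/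
lemma piola (ha : ∀ p, ContDiff ℝ (⊤ : ℕ∞) (a p)) (x : E (N+1)) :
    ∑ k, gradv (Mfun a k) x k = 0 := by
  classical
  have hrw : ∀ k, gradv (Mfun a k) x k = ∑ p : Fin N,
      detC (N+1) (Function.update
        (Fin.snoc (fun q => gradv (a q) x) (Pi.single k 1) : Fin (N+1) → E (N+1))
        (Fin.castSucc p) (fderiv ℝ (gradv (a p)) x (Pi.single k 1))) :=
    fun k => gradv_Mfun ha x k k
  simp_rw [hrw]
  rw [Finset.sum_comm]
  refine Finset.sum_eq_zero fun p _ => ?_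
  set w : Fin (N+1) → (Fin (N+1) → E (N+1)) :=
    fun k => (Fin.snoc (fun q => gradv (a q) x) (Pi.single k 1)) with hw
  set p' : Fin (N+1) := Fin.castSucc p with hp'
  have hne : p' ≠ Fin.last N := (Fin.castSucc_lt_last p).ne
  set H : Fin (N+1) → E (N+1) := fun k => fderiv ℝ (gradv (a p)) x (Pi.single k 1) with hH
  set T : Fin (N+1) → Fin (N+1) → ℝ :=
    fun j k => detC (N+1) (Function.update (w k) p' (Pi.single j 1)) with hT
  have hcomp : ∀ j k : Fin (N+1),
      (Function.update (w k) p' (Pi.single j 1)) ∘ (Equiv.swap p' (Fin.last N))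
        = Function.update (w j) p' (Pi.single k 1) := by
    intro j k
    funext i
    rw [Function.comp_apply]
    rcases eq_or_ne i p' with rfl | hip
    · rw [Equiv.swap_apply_left, Function.update_of_ne hne.symm, Function.update_self]
      simp [hw]
    rcases eq_or_ne i (Fin.last N) with rfl | hil
    · rw [Equiv.swap_apply_right, Function.update_self, Function.update_of_ne hne.symm]
      simp [hw]
    · rw [Equiv.swap_apply_of_ne_of_ne hip hil, Function.update_of_ne hip,
        Function.update_of_ne hip]
      obtain ⟨q, rfl⟩ := Fin.eq_castSucc_of_ne_last hil
      simp [hw]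
  have hTanti : ∀ j k, T k j = - T j k := by
    intro j k
    rw [hT]
    simp only
    rw [← hcomp j k, detC_swap _ hne]
  have hexp : ∀ k, detC (N+1) (Function.update (w k) p' (H k))
      = ∑ j, H k j * T j k := fun k => detC_update_linear (w k) p' (H k)
  have hHsymm : ∀ k j, H k j = H j k := fun k j => hess_symm (ha p) x k j
  have key : (∑ k, ∑ j, H k j * T j k) = - ∑ k, ∑ j, H k j * T j k := by
    conv_lhs => rw [Finset.sum_comm]
    rw [← Finset.sum_neg_distrib]
    refine Finset.sum_congr rfl fun k _ => ?_
    rw [← Finset.sum_neg_distrib]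
    refine Finset.sum_congr rfl fun j _ => ?_
    rw [hHsymm j k, hTanti k j]
    ring
  have : (∑ k, ∑ j, H k j * T j k) = 0 := by linarith
  calc ∑ k, detC (N+1) (Function.update (w k) p' (H k)) = ∑ k, ∑ j, H k j * T j k :=
        Finset.sum_congr rfl fun k _ => hexp k
    _ = 0 := this
end Piola

section Assemble
variable {N : ℕ} {l : E (N+1) → ℝ} {a : Fin N → (E (N+1) → ℝ)}

lemma gradv_mul {f g : E n → ℝ} (hf : ContDiff ℝ (⊤ : ℕ∞) f) (hg : ContDiff ℝ (⊤ : ℕ∞) g) (x : E n)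
    (j : Fin n) :
    gradv (fun y => f y * g y) x j = f x * gradv g x j + g x * gradv f x j := by
  have hfd : HasFDerivAt f (fderiv ℝ f x) x := (hf.differentiable (by simp) x).hasFDerivAt
  have hgd : HasFDerivAt g (fderiv ℝ g x) x := (hg.differentiable (by simp) x).hasFDerivAt
  have h : HasFDerivAt (fun y => f y * g y) _ x := hfd.mul hgd
  have : gradv (fun y => f y * g y) x j = fderiv ℝ (fun y => f y * g y) x (Pi.single j 1) := rfl
  rw [this, h.fderiv]
  simp [gradv]

lemma contDiff_cfun (hl : ContDiff ℝ (⊤ : ℕ∞) l) (ha : ∀ p, ContDiff ℝ (⊤ : ℕ∞) (a p)) (k : Fin (N+1)) :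
    ContDiff ℝ (⊤ : ℕ∞) (cfun l a k) :=
  hl.mul (contDiff_Mfun ha k)

lemma gradv_cfun (hl : ContDiff ℝ (⊤ : ℕ∞) l) (ha : ∀ p, ContDiff ℝ (⊤ : ℕ∞) (a p)) (x : E (N+1))
    (k j : Fin (N+1)) :
    gradv (cfun l a k) x j = gradv l x j * Mfun a k x + l x * gradv (Mfun a k) x j := by
  have := gradv_mul hl (contDiff_Mfun ha k) x j
  rw [show cfun l a k = fun y => l y * Mfun a k y from rfl, this]
  ring

/-- derivative of `P h` through its first-order representation -/
lemma gradv_P_repr (hl : ContDiff ℝ (⊤ : ℕ∞) l) (ha : ∀ p, ContDiff ℝ (⊤ : ℕ∞) (a p))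
    {h : E (N+1) → ℝ} (hh : ContDiff ℝ (⊤ : ℕ∞) h) (x : E (N+1)) (j : Fin (N+1)) :
    gradv (P l a h) x j = ∑ k, (cfun l a k x * fderiv ℝ (gradv h) x (Pi.single j 1) k
      + gradv h x k * gradv (cfun l a k) x j) := by
  have hrepr : P l a h = fun y => ∑ k, cfun l a k y * gradv h y k := by
    funext y; exact P_eq_sum l a h y
  have hterm : ∀ k : Fin (N+1), HasFDerivAt (fun y => cfun l a k y * gradv h y k)
      ((cfun l a k x) • ((ContinuousLinearMap.proj k) ∘L fderiv ℝ (gradv h) x)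
        + (gradv h x k) • fderiv ℝ (cfun l a k) x) x := by
    intro k
    have h1 : HasFDerivAt (cfun l a k) (fderiv ℝ (cfun l a k) x) x :=
      ((contDiff_cfun hl ha k).differentiable (by simp) x).hasFDerivAt
    have h2 : HasFDerivAt (fun y => gradv h y k)
        ((ContinuousLinearMap.proj k) ∘L fderiv ℝ (gradv h) x) x :=
by
      have := (ContinuousLinearMap.hasFDerivAt
        (ContinuousLinearMap.proj (R := ℝ) (φ := fun _ : Fin (N+1) => ℝ) k)).comp x
        (hasFDerivAt_gradv hh x)
      exact this
    exact h1.mul h2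
  have hsum : HasFDerivAt (fun y => ∑ k : Fin (N+1), cfun l a k y * gradv h y k)
      (∑ k : Fin (N+1), ((cfun l a k x) • ((ContinuousLinearMap.proj k) ∘L fderiv ℝ (gradv h) x)
        + (gradv h x k) • fderiv ℝ (cfun l a k) x)) x :=
    HasFDerivAt.fun_sum fun k _ => hterm k
  have : gradv (P l a h) x j = fderiv ℝ (P l a h) x (Pi.single j 1) := rfl
  rw [this, hrepr, hsum.fderiv]
  simp [gradv]
end Assemble

section FI
variable {N : ℕ} {l : E (N+1) → ℝ} {a : Fin N → (E (N+1) → ℝ)}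

lemma detC_update_add (w : Fin n → E n) (i : Fin n) (u v : E n) :
    detC n (Function.update w i (u + v))
      = detC n (Function.update w i u) + detC n (Function.update w i v) := by
  erw [(detC n).toMultilinearMap.map_update_add w i u v]; rfl

lemma detC_update_sum_smul {q : ℕ} (w : Fin n → E n) (i : Fin n) (t : Fin q → ℝ)
    (v : Fin q → E n) :
    detC n (Function.update w i (∑ k, t k • v k))
      = ∑ k, t k * detC n (Function.update w i (v k)) := by
  erw [(detC n).toMultilinearMap.map_update_sum Finset.univ i (fun k => t k • v k) w]
  refine Finset.sum_congr rfl fun k _ => ?_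
  simpa using (detC n).toMultilinearMap.map_update_smul w i (t k) (v k)

theorem fundamental_identity (hl : ContDiff ℝ (⊤ : ℕ∞) l) (ha : ∀ p, ContDiff ℝ (⊤ : ℕ∞) (a p))
    {b : Fin (N+1) → (E (N+1) → ℝ)} (hb : ∀ i, ContDiff ℝ (⊤ : ℕ∞) (b i)) (x : E (N+1)) :
    P l a (Q l b) x = ∑ i : Fin (N+1),
      l x * detC (N+1) (Function.update (rowsf b x) i (gradv (P l a (b i)) x)) := by
  classical
  set R : Fin (N+1) → E (N+1) := rowsf b x with hR
  set δ : ℝ := detC (N+1) R with hδ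
  set c : Fin (N+1) → ℝ := fun k => cfun l a k x with hc
  set Hb : Fin (N+1) → Fin (N+1) → E (N+1) :=
    fun i k => fderiv ℝ (gradv (b i)) x (Pi.single k 1) with hHb
  -- expansion of the left-hand side
  have expand_L : P l a (Q l b) x = (∑ k, c k * gradv l x k) * δ
      + l x * ∑ k, ∑ i, c k * detC (N+1) (Function.update R i (Hb i k)) := by
    rw [P_eq_sum]
    have hterm : ∀ k ∈ Finset.univ, cfun l a k x * gradv (Q l b) x k
        = c k * gradv l x k * δ
          + l x * ∑ i, c k * detC (N+1) (Function.update R i (Hb i k)) := by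
      intro k _
      rw [gradv_Q hl hb x k]
      simp only [mul_add, Finset.mul_sum]
      congr 1
      · ring
      · exact Finset.sum_congr rfl fun i _ => by ring
    rw [Finset.sum_congr rfl hterm, Finset.sum_add_distrib, ← Finset.sum_mul, ← Finset.mul_sum]
  -- the gradient of `P (b i)` as a sum of rows
  have hvec : ∀ i, gradv (P l a (b i)) x
      = (∑ k, c k • Hb i k) + (∑ k, (R i k) • gradv (cfun l a k) x) := by
    intro i
    funext j
    rw [gradv_P_repr hl ha (hb i) x j]
    have hsymm : ∀ k, fderiv ℝ (gradv (b i)) x (Pi.single j 1) k = Hb i k j :=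
      fun k => hess_symm (hb i) x j k
    simp only [Pi.add_apply, Finset.sum_apply, Pi.smul_apply, smul_eq_mul]
    rw [← Finset.sum_add_distrib]
    refine Finset.sum_congr rfl fun k _ => ?_
    rw [hsymm k]
    rfl
  -- expansion of each term on the right-hand side
  have hRterm : ∀ i, detC (N+1) (Function.update R i (gradv (P l a (b i)) x))
      = (∑ k, c k * detC (N+1) (Function.update R i (Hb i k)))
        + (∑ k, R i k * detC (N+1) (Function.update R i (gradv (cfun l a k) x))) := by
    intro i
    rw [hvec i, detC_update_add, detC_update_sum_smul, detC_update_sum_smul]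
  have expand_R : (∑ i : Fin (N+1),
        l x * detC (N+1) (Function.update R i (gradv (P l a (b i)) x)))
      = l x * ∑ k, ∑ i, c k * detC (N+1) (Function.update R i (Hb i k))
        + l x * ((∑ k, gradv (cfun l a k) x k) * δ) := by
    calc (∑ i : Fin (N+1), l x * detC (N+1) (Function.update R i (gradv (P l a (b i)) x)))
        = ∑ i : Fin (N+1), (l x * ∑ k, c k * detC (N+1) (Function.update R i (Hb i k))
          + l x * ∑ k, R i k * detC (N+1) (Function.update R i (gradv (cfun l a k) x))) := by
          refine Finset.sum_congr rfl fun i _ => ?_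
          rw [hRterm i, mul_add]
      _ = l x * ∑ i, ∑ k, c k * detC (N+1) (Function.update R i (Hb i k))
          + l x * ∑ i, ∑ k, R i k * detC (N+1) (Function.update R i (gradv (cfun l a k) x)) := by
          rw [Finset.sum_add_distrib, ← Finset.mul_sum, ← Finset.mul_sum]
      _ = l x * ∑ k, ∑ i, c k * detC (N+1) (Function.update R i (Hb i k))
          + l x * ((∑ k, gradv (cfun l a k) x k) * δ) := by
          have hswap : (∑ i : Fin (N+1), ∑ k, c k * detC (N+1) (Function.update R i (Hb i k)))
              = ∑ k, ∑ i, c k * detC (N+1) (Function.update R i (Hb i k)) := Finset.sum_comm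
          have h2 : (∑ i : Fin (N+1), ∑ k, R i k
                * detC (N+1) (Function.update R i (gradv (cfun l a k) x)))
              = (∑ k, gradv (cfun l a k) x k) * δ := by
            rw [Finset.sum_comm, Finset.sum_mul]
            refine Finset.sum_congr rfl fun k _ => ?_
            rw [← sum_detC_update_mul R (gradv (cfun l a k) x) k]
            exact Finset.sum_congr rfl fun i _ => by ring
          rw [hswap, h2]
  -- the residual identity, using the Piola identity
  have residual : (∑ k, c k * gradv l x k) * δ
      = l x * ((∑ k, gradv (cfun l a k) x k) * δ) := by
    have h1 : ∑ k, gradv (cfun l a k) x k = ∑ k, gradv l x k * Mfun a k x := by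
      have : ∀ k ∈ Finset.univ, gradv (cfun l a k) x k
          = gradv l x k * Mfun a k x + l x * gradv (Mfun a k) x k :=
        fun k _ => gradv_cfun hl ha x k k
      rw [Finset.sum_congr rfl this, Finset.sum_add_distrib, ← Finset.mul_sum,
        piola ha x, mul_zero, add_zero]
    have h2 : ∀ k, c k = l x * Mfun a k x := fun k => rfl
    rw [h1, Finset.sum_mul, Finset.sum_mul, Finset.mul_sum]
    refine Finset.sum_congr rfl fun k _ => ?_
    rw [h2 k]
    ring
  rw [expand_L, expand_R, residual]
  ring
end FI

section Glue
variable {m : ℕ}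

lemma rowsf_update (u : Fin n → (E n → ℝ)) (j : Fin n) (h : E n → ℝ) (y : E n) :
    rowsf (Function.update u j h) y = Function.update (rowsf u y) j (gradv h y) := by
  funext i
  rcases eq_or_ne i j with rfl | hij
  · simp [rowsf]
  · simp [rowsf, Function.update_of_ne hij]

lemma detC_update_zero (w : Fin n → E n) (i : Fin n) :
    detC n (Function.update w i 0) = 0 := by
  erw [(detC n).toMultilinearMap.map_coord_zero (m := Function.update w i 0) i
    (Function.update_self i 0 w)]

lemma gradv_zero_fn (x : E n) : gradv (fun _ => (0:ℝ)) x = 0 := by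
  funext j
  simp [gradv]

end Glue

theorem final (m : ℕ) (l f : (Fin (m + 2) → ℝ) → ℝ)
    (hl : ContDiff ℝ (⊤ : ℕ∞) l) (hf : ContDiff ℝ (⊤ : ℕ∞) f)
    (F : Fin m → ((Fin (m + 2) → ℝ) → ℝ))
    (G : Fin (m + 1) → ((Fin (m + 2) → ℝ) → ℝ))
    (hF : ∀ i, ContDiff ℝ (⊤ : ℕ∞) (F i)) (hG : ∀ i, ContDiff ℝ (⊤ : ℕ∞) (G i))
    (x : Fin (m + 2) → ℝ) :
    contractedBracket m l f (Fin.snoc F (contractedBracket m l f G)) x =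
      ∑ i : Fin (m + 1),
        contractedBracket m l f
          (Function.update G i (contractedBracket m l f (Fin.snoc F (G i)))) x := by
  classical
  set a : Fin (m+1) → (E (m+2) → ℝ) := Fin.cons f F with hadef
  set b : Fin (m+2) → (E (m+2) → ℝ) := Fin.cons f G with hbdef
  have ha : ∀ p, ContDiff ℝ (⊤ : ℕ∞) (a p) := fun p => Fin.cases hf hF p
  have hb : ∀ i, ContDiff ℝ (⊤ : ℕ∞) (b i) := fun i => Fin.cases hf hG i
  have hbr : ∀ g : Fin (m+1) → (E (m+2) → ℝ),
      contractedBracket m l f g = Q l (Fin.cons f g) := by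
    intro g
    funext y
    rw [contractedBracket, Q, detC_apply]
    rfl
  -- identify the left-hand side with `P l a (Q l b) x`
  have hL : contractedBracket m l f (Fin.snoc F (contractedBracket m l f G)) x
      = P l a (Q l b) x := by
    rw [hbr, hbr]
    rw [show (Fin.cons f (Fin.snoc F (Q l (Fin.cons f G))) :
        Fin (m+2) → (E (m+2) → ℝ)) = Fin.snoc a (Q l b) from
      Fin.cons_snoc_eq_snoc_cons f F (Q l b)]
    rfl
  -- identify each term of the right-hand side
  have hR : ∀ i : Fin (m+1),
      contractedBracket m l f
          (Function.update G i (contractedBracket m l f (Fin.snoc F (G i)))) x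
        = l x * detC (m+2) (Function.update (rowsf b x) i.succ
            (gradv (P l a (b i.succ)) x)) := by
    intro i
    have hA : contractedBracket m l f (Fin.snoc F (G i)) = P l a (b i.succ) := by
      rw [hbr]
      rw [show (Fin.cons f (Fin.snoc F (G i)) : Fin (m+2) → (E (m+2) → ℝ))
        = Fin.snoc a (G i) from Fin.cons_snoc_eq_snoc_cons f F (G i)]
      have : b i.succ = G i := by rw [hbdef]; simp
      rw [this]
      rfl
    rw [hbr, hA]
    have hcu : (Fin.cons f (Function.update G i (P l a (b i.succ))) :
        Fin (m+2) → (E (m+2) → ℝ)) = Function.update b i.succ (P l a (b i.succ)) := by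
      rw [hbdef, Fin.cons_update]
    rw [hcu, Q, rowsf_update]
  -- the term `i = 0` of the fundamental identity vanishes
  have hzero : P l a (b 0) = fun _ => (0:ℝ) := by
    funext y
    have hb0 : b 0 = f := by rw [hbdef]; simp
    rw [hb0]
    have hrows : rowsf (Fin.snoc a f) y 0 = rowsf (Fin.snoc a f) y (Fin.last (m+1)) := by
      have h0 : (Fin.snoc a f : Fin (m+2) → (E (m+2) → ℝ)) 0 = f := by
        have : (0 : Fin (m+2)) = Fin.castSucc 0 := rfl
        rw [this, Fin.snoc_castSucc, hadef]
        simp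
      have hlast : (Fin.snoc a f : Fin (m+2) → (E (m+2) → ℝ)) (Fin.last (m+1)) = f := by
        simp
      simp [rowsf, h0, hlast]
    have hne : (0 : Fin (m+2)) ≠ Fin.last (m+1) := by
      simp [Fin.ext_iff]
    rw [P, Q, detC_eq_zero_of_eq _ hrows hne, mul_zero]
  have hFI := fundamental_identity hl ha hb x
  rw [hL, hFI, Fin.sum_univ_succ]
  have h0 : l x * detC (m+2) (Function.update (rowsf b x) 0 (gradv (P l a (b 0)) x)) = 0 := by
    rw [hzero, gradv_zero_fn, detC_update_zero, mul_zero]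
  rw [h0, zero_add]
  exact (Finset.sum_congr rfl fun i _ => (hR i).symm)


end NambuFI
end

/-- for `n = m + 2 ≥ 2` and smooth `l, f : ℝⁿ → ℝ`, the bracket
`{g₁, …, g_{n-1}}_f = l · det Jac(f, g₁, …, g_{n-1})` satisfies the Fundamental
Identity of degree `n - 1`: the contraction `i_{df} Λ` of a top-degree Nambu
structure with an exact 1-form `df` is again a Nambu structure. -/
theorem fundamentalIdentity_contraction (m : ℕ) (l f : (Fin (m + 2) → ℝ) → ℝ)
    (hl : ContDiff ℝ (⊤ : ℕ∞) l) (hf : ContDiff ℝ (⊤ : ℕ∞) f)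
    (F : Fin m → ((Fin (m + 2) → ℝ) → ℝ))
    (G : Fin (m + 1) → ((Fin (m + 2) → ℝ) → ℝ))
    (hF : ∀ i, ContDiff ℝ (⊤ : ℕ∞) (F i)) (hG : ∀ i, ContDiff ℝ (⊤ : ℕ∞) (G i))
    (x : Fin (m + 2) → ℝ) :
    contractedBracket m l f (Fin.snoc F (contractedBracket m l f G)) x =
      ∑ i : Fin (m + 1),
        contractedBracket m l f
          (Function.update G i (contractedBracket m l f (Fin.snoc F (G i)))) x :=
  NambuFI.final m l f hl hf F G hF hG x
end

section
/- Let f : ℝ → ℝ be smooth on (−1,1) with f(0) = 0, f'(0) = 1, and f(r) ≠ 0 for every r ∈ (−1,1) with r ≠ 0. Then for every k > 0 there exists a function g : ℝ → ℝ, smooth on (−1,1), such that g(0) = 0, g'(0) = k, g'(r) > 0 for all r ∈ (−1,1), and g satisfies the linearization equation g(r) = f(r)·g'(r) for all r ∈ (−1,1) (equivalently, ∂g/∂r = g/f away from r = 0). In particular g is an orientation-preserving change of coordinates fixing 0 which transforms the multi-vector field f·Λ₀ into its linearization r·Λ₀. -/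
open Set

open scoped Topology ContDiff

lemma dslope_zero_eq {f : ℝ → ℝ} (t : ℝ) : f t = f 0 + t * dslope f 0 t := by
  have h := sub_smul_dslope f 0 t
  simp only [sub_zero, smul_eq_mul] at h
  linarith

lemma smul_mem_Ioo_aux {t x : ℝ} (ht : t ∈ Icc (0:ℝ) 1) (hx : x ∈ Ioo (-1:ℝ) 1) :
    t * x ∈ Ioo (-1:ℝ) 1 := by
  obtain ⟨h1, h2⟩ := ht
  obtain ⟨h3, h4⟩ := hx
  constructor
  · nlinarith [mul_nonneg h1 (by linarith : (0:ℝ) ≤ x + 1),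
      mul_nonneg (by linarith : (0:ℝ) ≤ 1 - t) (by linarith : (0:ℝ) ≤ 1 - x)]
  · nlinarith [mul_nonneg h1 (by linarith : (0:ℝ) ≤ 1 - x),
      mul_nonneg (by linarith : (0:ℝ) ≤ 1 - t) (by linarith : (0:ℝ) ≤ 1 + x)]

lemma param_hasDerivAt_aux (F : ℝ → ℝ) (hF : ContDiffOn ℝ ∞ F (Ioo (-1) 1)) (m : ℕ) {x₀ : ℝ}
    (hx₀ : x₀ ∈ Ioo (-1:ℝ) 1) :
    HasDerivAt (fun x => ∫ s in (0:ℝ)..1, s ^ m * F (s * x))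
      (∫ s in (0:ℝ)..1, s ^ (m + 1) * deriv F (s * x₀)) x₀ := by
  have hFc : ContinuousOn F (Ioo (-1) 1) := hF.continuousOn
  have hF' : ContDiffOn ℝ ∞ (deriv F) (Ioo (-1) 1) :=
    ((contDiffOn_infty_iff_deriv_of_isOpen isOpen_Ioo).1 hF).2
  have hF'c : ContinuousOn (deriv F) (Ioo (-1) 1) := hF'.continuousOn
  have hcont : ∀ (G : ℝ → ℝ), ContinuousOn G (Ioo (-1) 1) → ∀ (k : ℕ) (x : ℝ),
      x ∈ Ioo (-1:ℝ) 1 → IntervalIntegrable (fun s => s ^ k * G (s * x)) MeasureTheory.volume 0 1 := by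
    intro G hG k x hx
    apply ContinuousOn.intervalIntegrable
    rw [uIcc_of_le zero_le_one]
    exact (continuousOn_pow k).mul (hG.comp (by fun_prop) (fun t ht => smul_mem_Ioo_aux ht hx))
  have hax : |x₀| < 1 := abs_lt.mpr hx₀
  set δ := (1 - |x₀|) / 2 with hδ
  have hδ0 : 0 < δ := by rw [hδ]; linarith
  have hR : ∀ x ∈ Metric.ball x₀ δ, |x| ≤ |x₀| + δ := by
    intro x hx
    rw [Metric.mem_ball, Real.dist_eq] at hx
    have := abs_sub_abs_le_abs_sub x x₀
    linarith
  have hballI : ∀ x ∈ Metric.ball x₀ δ, x ∈ Ioo (-1:ℝ) 1 := by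
    intro x hx
    have := hR x hx
    exact abs_lt.mp (by rw [hδ] at this; linarith)
  obtain ⟨C, hC⟩ := (isCompact_Icc (a := -(|x₀| + δ)) (b := |x₀| + δ)).exists_bound_of_continuousOn
    (hF'c.mono (fun y hy => abs_lt.mp (by have := abs_le.mpr hy; rw [hδ] at this; linarith)))
  have key := intervalIntegral.hasDerivAt_integral_of_dominated_loc_of_deriv_le
    (μ := MeasureTheory.volume) (a := 0) (b := 1)
    (F := fun x s => s ^ m * F (s * x)) (F' := fun x s => s ^ (m + 1) * deriv F (s * x))
    (x₀ := x₀) (bound := fun _ => C) (Metric.ball_mem_nhds x₀ hδ0)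
    (by
      filter_upwards [Metric.ball_mem_nhds x₀ hδ0] with x hx
      exact (hcont F hFc m x (hballI x hx)).def'.aestronglyMeasurable)
    (hcont F hFc m x₀ hx₀)
    ((hcont (deriv F) hF'c (m + 1) x₀ hx₀).def'.aestronglyMeasurable)
    (by
      apply MeasureTheory.ae_of_all
      intro t ht x hx
      rw [uIoc_of_le zero_le_one] at ht
      have htx : t * x ∈ Icc (-(|x₀| + δ)) (|x₀| + δ) := by
        apply abs_le.mp
        rw [abs_mul, abs_of_pos ht.1]
        have := hR x hx
        nlinarith [abs_nonneg x, ht.2]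
      show ‖t ^ (m + 1) * deriv F (t * x)‖ ≤ C
      rw [norm_mul]
      calc ‖t ^ (m + 1)‖ * ‖deriv F (t * x)‖ ≤ ‖deriv F (t * x)‖ := by
            apply mul_le_of_le_one_left (norm_nonneg _)
            rw [norm_pow, Real.norm_eq_abs, abs_of_pos ht.1]
            exact pow_le_one₀ ht.1.le ht.2
        _ ≤ C := hC _ htx)
    intervalIntegrable_const
    (by
      apply MeasureTheory.ae_of_all
      intro t ht x hx
      rw [uIoc_of_le zero_le_one] at ht
      show HasDerivAt (fun x => t ^ m * F (t * x)) (t ^ (m + 1) * deriv F (t * x)) x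
      have hd : DifferentiableAt ℝ F (t * x) :=
        (hF.differentiableOn (by simp)).differentiableAt
          (isOpen_Ioo.mem_nhds (smul_mem_Ioo_aux ⟨ht.1.le, ht.2⟩ (hballI x hx)))
      have := (hd.hasDerivAt.comp x ((hasDerivAt_id x).const_mul t)).const_mul (t ^ m)
      exact this.congr_deriv (by ring))
  exact key.2

lemma param_contDiffOn_aux (n : ℕ) : ∀ (F : ℝ → ℝ), ContDiffOn ℝ ∞ F (Ioo (-1) 1) → ∀ m : ℕ,
    ContDiffOn ℝ n (fun x => ∫ s in (0:ℝ)..1, s ^ m * F (s * x)) (Ioo (-1) 1) := by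
  induction n with
  | zero =>
    intro F hF m
    simp only [Nat.cast_zero]
    rw [contDiffOn_zero]
    exact fun x hx => (param_hasDerivAt_aux F hF m hx).continuousAt.continuousWithinAt
  | succ n ih =>
    intro F hF m
    have hF' : ContDiffOn ℝ ∞ (deriv F) (Ioo (-1) 1) :=
      ((contDiffOn_infty_iff_deriv_of_isOpen isOpen_Ioo).1 hF).2
    rw [Nat.cast_succ, contDiffOn_succ_iff_deriv_of_isOpen isOpen_Ioo]
    refine ⟨fun x hx => (param_hasDerivAt_aux F hF m hx).differentiableAt.differentiableWithinAt,
      by simp, ?_⟩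
    apply (ih (deriv F) hF' (m + 1)).congr
    intro x hx
    exact (param_hasDerivAt_aux F hF m hx).deriv

lemma dslope_contDiffOn_aux (F : ℝ → ℝ) (hF : ContDiffOn ℝ ∞ F (Ioo (-1) 1)) :
    ContDiffOn ℝ ∞ (dslope F 0) (Ioo (-1) 1) := by
  have hF' : ContDiffOn ℝ ∞ (deriv F) (Ioo (-1) 1) :=
    ((contDiffOn_infty_iff_deriv_of_isOpen isOpen_Ioo).1 hF).2
  have h0I : (0 : ℝ) ∈ Ioo (-1 : ℝ) 1 := by constructor <;> norm_num
  refine (contDiffOn_infty.2 fun n => param_contDiffOn_aux n (deriv F) hF' 0).congr ?_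
  intro x hx
  show dslope F 0 x = ∫ s in (0:ℝ)..1, s ^ 0 * deriv F (s * x)
  simp only [pow_zero, one_mul]
  rcases eq_or_ne x 0 with rfl | hx0
  · simp [dslope_same]
  · rw [dslope_of_ne F hx0, slope_def_field, sub_zero,
      intervalIntegral.integral_comp_mul_right (fun y => deriv F y) hx0]
    simp only [zero_mul, one_mul, smul_eq_mul]
    have hsub := ordConnected_Ioo.uIcc_subset h0I hx
    rw [intervalIntegral.integral_deriv_eq_sub
      (fun y hy => (hF.differentiableOn (by simp)).differentiableAt
        (isOpen_Ioo.mem_nhds (hsub hy)))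
      ((hF'.continuousOn.mono hsub).intervalIntegrable)]
    ring

/-- local linearization o.d.e. (equation (1) in the proof of
Proposition 3). If `f` is smooth on `(-1, 1)`, vanishes at `0` with `f'(0) = 1`,
and is nonzero elsewhere, then for every `k > 0` there is a function `g`, smooth on
`(-1, 1)`, with `g(0) = 0`, `g'(0) = k`, `g' > 0` on `(-1, 1)`, solving the
linearization equation `g = f · g'` (equivalently `∂g/∂r = g/f` away from `0`). -/
theorem linearization_ode_solution (f : ℝ → ℝ)
    (hf : ContDiffOn ℝ (⊤ : ℕ∞) f (Ioo (-1) 1))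
    (hf0 : f 0 = 0) (hf'0 : deriv f 0 = 1)
    (hfne : ∀ r ∈ Ioo (-1 : ℝ) 1, r ≠ 0 → f r ≠ 0) :
    ∀ k : ℝ, 0 < k →
      ∃ g : ℝ → ℝ, ContDiffOn ℝ (⊤ : ℕ∞) g (Ioo (-1) 1) ∧ g 0 = 0 ∧ deriv g 0 = k ∧
        (∀ r ∈ Ioo (-1 : ℝ) 1, 0 < deriv g r) ∧
        (∀ r ∈ Ioo (-1 : ℝ) 1, g r = f r * deriv g r) := by
  intro k hk
  set I : Set ℝ := Ioo (-1 : ℝ) 1 with hI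
  have hIopen : IsOpen I := isOpen_Ioo
  have h0I : (0 : ℝ) ∈ I := by constructor <;> norm_num
  -- f is analytic on I
  -- u := dslope f 0 : f t = t * u t, u 0 = 1, u analytic on I
  set u : ℝ → ℝ := dslope f 0 with hu_def
  have hu : ContDiffOn ℝ ∞ u I := dslope_contDiffOn_aux f hf
  have hfu : ∀ t : ℝ, f t = t * u t := by
    intro t
    have := dslope_zero_eq (f := f) t
    rw [hf0] at this
    linarith
  have hu0 : u 0 = 1 := by rw [hu_def, dslope_same, hf'0]
  -- u > 0 on I
  have hune : ∀ y ∈ I, u y ≠ 0 := by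
    intro y hy
    rcases eq_or_ne y 0 with rfl | hy0
    · rw [hu0]; norm_num
    · intro h
      exact hfne y hy hy0 (by rw [hfu y, h, mul_zero])
  have hupos : ∀ x ∈ I, 0 < u x := by
    intro x hx
    by_contra hle
    push_neg at hle
    have hucont : ContinuousOn u (uIcc x 0) := by
      exact hu.continuousOn.mono (ordConnected_Ioo.uIcc_subset hx h0I)
    have h0mem : (0 : ℝ) ∈ uIcc (u x) (u 0) := by
      rw [hu0]
      exact mem_uIcc.mpr (Or.inl ⟨hle, by norm_num⟩)
    obtain ⟨y, hy, hy0⟩ := intermediate_value_uIcc hucont h0mem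
    exact hune y (ordConnected_Ioo.uIcc_subset hx h0I hy) hy0
  -- w := dslope (1 - u) 0 : 1 - u t = t * w t, w analytic on I
  set w : ℝ → ℝ := dslope (fun t => 1 - u t) 0 with hw_def
  have hw : ContDiffOn ℝ ∞ w I := dslope_contDiffOn_aux _ (contDiffOn_const.sub hu)
  have huw : ∀ t : ℝ, 1 - u t = t * w t := by
    intro t
    have := dslope_zero_eq (f := fun t => 1 - u t) t
    simp only [hu0, sub_self] at this
    rw [← hw_def] at this
    linarith
  -- h := w / u, analytic on I
  set q : ℝ → ℝ := fun t => w t / u t with hq_def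
  have hq : ContDiffOn ℝ ∞ q I := hw.div hu hune
  have hqcont : ContinuousOn q I := hq.continuousOn
  -- H := ∫₀ʳ q
  set H : ℝ → ℝ := fun r => ∫ t in (0 : ℝ)..r, q t with hH_def
  have hHd : ∀ r ∈ I, HasDerivAt H (q r) r := by
    intro r hr
    apply intervalIntegral.integral_hasDerivAt_right
    · exact (hqcont.mono (ordConnected_Ioo.uIcc_subset h0I hr)).intervalIntegrable
    · exact ContinuousOn.stronglyMeasurableAtFilter hIopen hqcont r hr
    · exact hqcont.continuousAt (hIopen.mem_nhds hr)
  have hHa : ContDiffOn ℝ ∞ H I := by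
    rw [contDiffOn_infty_iff_deriv_of_isOpen hIopen]
    exact ⟨fun x hx => (hHd x hx).differentiableAt.differentiableWithinAt,
      hq.congr fun x hx => (hHd x hx).deriv⟩
  have hH0 : H 0 = 0 := intervalIntegral.integral_same
  -- g := k * (r * exp (H r))
  set g : ℝ → ℝ := fun r => k * (r * Real.exp (H r)) with hg_def
  have hgd : ∀ r ∈ I, HasDerivAt g (k * (Real.exp (H r) * (u r)⁻¹)) r := by
    intro r hr
    have hur := hune r hr
    have h1 : HasDerivAt (fun y => y * Real.exp (H y))
        (1 * Real.exp (H r) + r * (Real.exp (H r) * q r)) r :=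
      (hasDerivAt_id r).mul ((hHd r hr).exp)
    have h2 : 1 * Real.exp (H r) + r * (Real.exp (H r) * q r)
        = Real.exp (H r) * (u r)⁻¹ := by
      simp only [hq_def]
      have h3 : 1 * Real.exp (H r) + r * (Real.exp (H r) * (w r / u r))
          = Real.exp (H r) + Real.exp (H r) * ((r * w r) / u r) := by ring
      rw [h3, ← huw r]
      field_simp
      ring
    rw [hg_def]
    have h4 := h1.const_mul k
    rw [h2] at h4
    exact h4
  refine ⟨g, ?_, by simp [hg_def], ?_, ?_, ?_⟩
  · -- smoothness
    exact contDiffOn_const.mul (contDiffOn_id.mul hHa.exp)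
  · -- deriv at 0 is k
    rw [(hgd 0 h0I).deriv, hH0, hu0]
    simp
  · -- positivity of deriv
    intro r hr
    rw [(hgd r hr).deriv]
    have h1 := Real.exp_pos (H r)
    have h2 := hupos r hr
    positivity
  · -- the ODE
    intro r hr
    rw [(hgd r hr).deriv, hfu r, hg_def]
    have hur := hune r hr
    field_simp
end

section
/- Let f : ℝ → ℝ be smooth on (−1,1) with f(0) = 0, f'(0) = 1, and f(r) ≠ 0 for every r ∈ (−1,1) with r ≠ 0. Suppose g₁, g₂ : ℝ → ℝ are differentiable on (−1,1), both satisfy gᵢ(r) = f(r)·gᵢ'(r) for all r ∈ (−1,1) (i = 1,2), and g₂'(0) ≠ 0. Then there exists a constant k ∈ ℝ such that g₁(r) = k·g₂(r) for all r ∈ (−1,1). (The solutions of the linearization equation ∂g/∂r = g/f form a one-parameter family: rescaling the radial coordinate is a canonical transformation of any linear Nambu structure.) -/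
open Set Filter

/-- Remark 1: the solutions of the linearization equation `g = f · g'`
on `(-1, 1)` form a one-parameter family: any solution is a constant multiple of a
fixed solution `g₂` with `g₂'(0) ≠ 0`. -/
theorem linearization_ode_uniqueness (f : ℝ → ℝ)
    (hf : ContDiffOn ℝ (⊤ : ℕ∞) f (Ioo (-1) 1))
    (hf0 : f 0 = 0) (hf'0 : deriv f 0 = 1)
    (hfne : ∀ r ∈ Ioo (-1 : ℝ) 1, r ≠ 0 → f r ≠ 0)
    (g₁ g₂ : ℝ → ℝ)
    (hg₁ : ∀ r ∈ Ioo (-1 : ℝ) 1, DifferentiableAt ℝ g₁ r)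
    (hg₂ : ∀ r ∈ Ioo (-1 : ℝ) 1, DifferentiableAt ℝ g₂ r)
    (heq₁ : ∀ r ∈ Ioo (-1 : ℝ) 1, g₁ r = f r * deriv g₁ r)
    (heq₂ : ∀ r ∈ Ioo (-1 : ℝ) 1, g₂ r = f r * deriv g₂ r)
    (hg₂0 : deriv g₂ 0 ≠ 0) :
    ∃ k : ℝ, ∀ r ∈ Ioo (-1 : ℝ) 1, g₁ r = k * g₂ r := by
  have h0I : (0:ℝ) ∈ Ioo (-1:ℝ) 1 := by norm_num
  have hg10 : g₁ 0 = 0 := by rw [heq₁ 0 h0I, hf0, zero_mul]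
  have hg20 : g₂ 0 = 0 := by rw [heq₂ 0 h0I, hf0, zero_mul]
  have hfd : HasDerivAt f 1 0 := by
    have hd : DifferentiableAt ℝ f 0 :=
      ((hf.differentiableOn (by simp)) 0 h0I).differentiableAt (isOpen_Ioo.mem_nhds h0I)
    simpa [hf'0] using hd.hasDerivAt
  have hfc : ContinuousOn f (Ioo (-1:ℝ) 1) := hf.continuousOn
  have hslope : ∀ᶠ x in nhdsWithin (0:ℝ) {x | x ≠ 0}, 0 < f x / x := by
    have h := hasDerivAt_iff_tendsto_slope.1 hfd
    have h2 : ∀ᶠ x in nhdsWithin (0:ℝ) {x | x ≠ 0}, 0 < slope f 0 x :=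
      h.eventually (eventually_gt_nhds one_pos)
    filter_upwards [h2] with x hx
    simpa [slope_def_field, hf0] using hx
  obtain ⟨ε, hε, hεs⟩ := Metric.eventually_nhds_iff.1 (eventually_nhdsWithin_iff.1 hslope)
  -- f > 0 on (0,1)
  have fpos : ∀ b ∈ Ioo (0:ℝ) 1, 0 < f b := by
    intro b hb
    set a : ℝ := min (ε/2) (b/2) with ha
    have hapos : 0 < a := lt_min (by linarith) (by linarith [hb.1])
    have hab : a ≤ b := le_trans (min_le_right _ _) (by linarith [hb.1])
    have hfa : 0 < f a := by
      have h1 : dist a 0 < ε := by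
        rw [Real.dist_eq, sub_zero, abs_of_pos hapos]
        have := min_le_left (ε/2) (b/2); linarith
      have h2 := hεs h1 (ne_of_gt hapos)
      have := mul_pos h2 hapos
      rwa [div_mul_cancel₀ _ (ne_of_gt hapos)] at this
    rcases lt_trichotomy (f b) 0 with hlt | heq | hgt
    · exfalso
      have hcont : ContinuousOn f (Icc a b) := hfc.mono (by
        intro x hx; exact ⟨by linarith [hx.1], lt_of_le_of_lt hx.2 hb.2⟩)
      obtain ⟨c, hc, hc0⟩ := intermediate_value_Icc' hab hcont
        (⟨le_of_lt hlt, le_of_lt hfa⟩ : (0:ℝ) ∈ Icc (f b) (f a))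
      have hcI : c ∈ Ioo (-1:ℝ) 1 :=
        ⟨by linarith [hc.1], lt_of_le_of_lt hc.2 hb.2⟩
      exact hfne c hcI (ne_of_gt (lt_of_lt_of_le hapos hc.1)) hc0
    · exact absurd heq (hfne b ⟨by linarith [hb.1], hb.2⟩ (ne_of_gt hb.1))
    · exact hgt
  -- f < 0 on (-1,0)
  have fneg : ∀ b ∈ Ioo (-1:ℝ) 0, f b < 0 := by
    intro b hb
    set a : ℝ := max (-(ε/2)) (b/2) with ha
    have haneg : a < 0 := by
      apply max_lt (by linarith) (by linarith [hb.2])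
    have hab : b ≤ a := le_trans (by linarith [hb.2]) (le_max_right _ _)
    have hfa : f a < 0 := by
      have h1 : dist a 0 < ε := by
        rw [Real.dist_eq, sub_zero, abs_of_neg haneg]
        have := le_max_left (-(ε/2)) (b/2); linarith
      have h2 := hεs h1 (ne_of_lt haneg)
      have h3 := mul_neg_of_pos_of_neg h2 haneg
      rwa [div_mul_cancel₀ _ (ne_of_lt haneg)] at h3
    rcases lt_trichotomy (f b) 0 with hlt | heq | hgt
    · exact hlt
    · exact absurd heq (hfne b ⟨hb.1, by linarith [hb.2]⟩ (ne_of_lt hb.2))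
    · exfalso
      have hcont : ContinuousOn f (Icc b a) := hfc.mono (by
        intro x hx; exact ⟨lt_of_lt_of_le hb.1 hx.1, by linarith [hx.2]⟩)
      obtain ⟨c, hc, hc0⟩ := intermediate_value_Icc' hab hcont
        (⟨le_of_lt hfa, le_of_lt hgt⟩ : (0:ℝ) ∈ Icc (f a) (f b))
      have hcI : c ∈ Ioo (-1:ℝ) 1 :=
        ⟨lt_of_lt_of_le hb.1 hc.1, by linarith [hc.2]⟩
      exact hfne c hcI (ne_of_lt (lt_of_le_of_lt hc.2 haneg)) hc0
  -- g₂ never vanishes on (0,1)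
  have key_pos : ∀ r₀ ∈ Ioo (0:ℝ) 1, g₂ r₀ ≠ 0 := by
    intro r₀ hr₀ hzero
    have hIcc : Icc (0:ℝ) r₀ ⊆ Ioo (-1:ℝ) 1 := fun x hx =>
      ⟨by linarith [hx.1], lt_of_le_of_lt hx.2 hr₀.2⟩
    have hdiff : ∀ x ∈ Icc (0:ℝ) r₀, DifferentiableAt ℝ (fun y => g₂ y * g₂ y) x :=
      fun x hx => (hg₂ x (hIcc hx)).mul (hg₂ x (hIcc hx))
    have hmono : MonotoneOn (fun y => g₂ y * g₂ y) (Icc 0 r₀) := by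
      apply monotoneOn_of_deriv_nonneg (convex_Icc 0 r₀)
      · exact fun x hx => (hdiff x hx).continuousAt.continuousWithinAt
      · rw [interior_Icc]
        exact fun x hx => ((hdiff x (Ioo_subset_Icc_self hx)).differentiableWithinAt)
      · rw [interior_Icc]
        intro x hx
        have hxI : x ∈ Ioo (-1:ℝ) 1 := hIcc (Ioo_subset_Icc_self hx)
        have hfx : 0 < f x := fpos x ⟨hx.1, lt_trans hx.2 hr₀.2⟩
        have hd : HasDerivAt (fun y => g₂ y * g₂ y)
            (deriv g₂ x * g₂ x + g₂ x * deriv g₂ x) x :=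
          (hg₂ x hxI).hasDerivAt.mul (hg₂ x hxI).hasDerivAt
        rw [hd.deriv]
        have h2 := heq₂ x hxI
        rw [h2]
        nlinarith [mul_nonneg hfx.le (sq_nonneg (deriv g₂ x))]
    have hzero' : ∀ s ∈ Icc (0:ℝ) r₀, g₂ s = 0 := by
      intro s hs
      have h1 := hmono (⟨le_refl 0, le_of_lt hr₀.1⟩ : (0:ℝ) ∈ Icc (0:ℝ) r₀) hs hs.1
      have h2 := hmono hs (⟨le_of_lt hr₀.1, le_refl r₀⟩ : r₀ ∈ Icc (0:ℝ) r₀) hs.2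
      simp only [hg20, hzero, mul_zero, zero_mul] at h1 h2
      nlinarith [mul_self_nonneg (g₂ s)]
    have hIoi : HasDerivWithinAt g₂ (deriv g₂ 0) (Ioi 0) 0 :=
      (hg₂ 0 h0I).hasDerivAt.hasDerivWithinAt
    have hev : g₂ =ᶠ[nhdsWithin (0:ℝ) (Ioi 0)] fun _ => (0:ℝ) := by
      filter_upwards [Ioc_mem_nhdsGT_of_mem (⟨le_refl 0, hr₀.1⟩ : (0:ℝ) ∈ Ico (0:ℝ) r₀)]
        with x hx
      exact hzero' x ⟨le_of_lt hx.1, hx.2⟩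
    have hconst : HasDerivWithinAt g₂ 0 (Ioi 0) 0 :=
      (hasDerivWithinAt_const _ _ (0:ℝ)).congr_of_eventuallyEq hev hg20
    exact hg₂0 (by
      rw [← hIoi.derivWithin (uniqueDiffWithinAt_Ioi 0),
        hconst.derivWithin (uniqueDiffWithinAt_Ioi 0)])
  -- g₂ never vanishes on (-1,0)
  have key_neg : ∀ r₀ ∈ Ioo (-1:ℝ) 0, g₂ r₀ ≠ 0 := by
    intro r₀ hr₀ hzero
    have hIcc : Icc r₀ (0:ℝ) ⊆ Ioo (-1:ℝ) 1 := fun x hx =>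
      ⟨lt_of_lt_of_le hr₀.1 hx.1, by linarith [hx.2]⟩
    have hdiff : ∀ x ∈ Icc r₀ (0:ℝ), DifferentiableAt ℝ (fun y => g₂ y * g₂ y) x :=
      fun x hx => (hg₂ x (hIcc hx)).mul (hg₂ x (hIcc hx))
    have hmono : AntitoneOn (fun y => g₂ y * g₂ y) (Icc r₀ 0) := by
      apply antitoneOn_of_deriv_nonpos (convex_Icc r₀ 0)
      · exact fun x hx => (hdiff x hx).continuousAt.continuousWithinAt
      · rw [interior_Icc]
        exact fun x hx => ((hdiff x (Ioo_subset_Icc_self hx)).differentiableWithinAt)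
      · rw [interior_Icc]
        intro x hx
        have hxI : x ∈ Ioo (-1:ℝ) 1 := hIcc (Ioo_subset_Icc_self hx)
        have hfx : f x < 0 := fneg x ⟨lt_trans hr₀.1 hx.1, hx.2⟩
        have hd : HasDerivAt (fun y => g₂ y * g₂ y)
            (deriv g₂ x * g₂ x + g₂ x * deriv g₂ x) x :=
          (hg₂ x hxI).hasDerivAt.mul (hg₂ x hxI).hasDerivAt
        rw [hd.deriv]
        have h2 := heq₂ x hxI
        rw [h2]
        nlinarith [mul_nonpos_of_nonpos_of_nonneg hfx.le (sq_nonneg (deriv g₂ x))]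
    have hzero' : ∀ s ∈ Icc r₀ (0:ℝ), g₂ s = 0 := by
      intro s hs
      have h1 := hmono (⟨le_refl r₀, le_of_lt hr₀.2⟩ : r₀ ∈ Icc r₀ (0:ℝ)) hs hs.1
      have h2 := hmono hs (⟨le_of_lt hr₀.2, le_refl 0⟩ : (0:ℝ) ∈ Icc r₀ (0:ℝ)) hs.2
      simp only [hg20, hzero, mul_zero, zero_mul] at h1 h2
      nlinarith [mul_self_nonneg (g₂ s)]
    have hIio : HasDerivWithinAt g₂ (deriv g₂ 0) (Iio 0) 0 :=
      (hg₂ 0 h0I).hasDerivAt.hasDerivWithinAt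
    have hev : g₂ =ᶠ[nhdsWithin (0:ℝ) (Iio 0)] fun _ => (0:ℝ) := by
      filter_upwards [Ico_mem_nhdsLT_of_mem (⟨hr₀.2, le_refl 0⟩ : (0:ℝ) ∈ Ioc r₀ (0:ℝ))]
        with x hx
      exact hzero' x ⟨hx.1, le_of_lt hx.2⟩
    have hconst : HasDerivWithinAt g₂ 0 (Iio 0) 0 :=
      (hasDerivWithinAt_const _ _ (0:ℝ)).congr_of_eventuallyEq hev hg20
    exact hg₂0 (by
      rw [← hIio.derivWithin (uniqueDiffWithinAt_Iio 0),
        hconst.derivWithin (uniqueDiffWithinAt_Iio 0)])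
  -- Wronskian identity
  have hW : ∀ x ∈ Ioo (-1:ℝ) 1, deriv g₁ x * g₂ x = g₁ x * deriv g₂ x := by
    intro x hx
    rw [heq₁ x hx, heq₂ x hx]; ring
  -- quotient constant on (0,1)
  have hqd_pos : ∀ x ∈ Ioo (0:ℝ) 1, HasDerivAt (fun y => g₁ y / g₂ y) 0 x := by
    intro x hx
    have hxI : x ∈ Ioo (-1:ℝ) 1 := ⟨by linarith [hx.1], hx.2⟩
    have h := (hg₁ x hxI).hasDerivAt.div (hg₂ x hxI).hasDerivAt (key_pos x hx)
    have heq0 : (deriv g₁ x * g₂ x - g₁ x * deriv g₂ x) / g₂ x ^ 2 = 0 := by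
      rw [hW x hxI]; simp
    rwa [heq0] at h
  have hqd_neg : ∀ x ∈ Ioo (-1:ℝ) 0, HasDerivAt (fun y => g₁ y / g₂ y) 0 x := by
    intro x hx
    have hxI : x ∈ Ioo (-1:ℝ) 1 := ⟨hx.1, by linarith [hx.2]⟩
    have h := (hg₁ x hxI).hasDerivAt.div (hg₂ x hxI).hasDerivAt (key_neg x hx)
    have heq0 : (deriv g₁ x * g₂ x - g₁ x * deriv g₂ x) / g₂ x ^ 2 = 0 := by
      rw [hW x hxI]; simp
    rwa [heq0] at h
  have hconst_pos : ∀ x ∈ Ioo (0:ℝ) 1, ∀ y ∈ Ioo (0:ℝ) 1,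
      g₁ x / g₂ x = g₁ y / g₂ y := by
    intro x hx y hy
    have hdq : DifferentiableOn ℝ (fun y => g₁ y / g₂ y) (Ioo (0:ℝ) 1) :=
      fun z hz => (hqd_pos z hz).differentiableAt.differentiableWithinAt
    have hfd' : ∀ z ∈ Ioo (0:ℝ) 1,
        fderivWithin ℝ (fun y => g₁ y / g₂ y) (Ioo (0:ℝ) 1) z = 0 := by
      intro z hz
      rw [fderivWithin_of_isOpen isOpen_Ioo hz, (hqd_pos z hz).hasFDerivAt.fderiv]
      ext; simp
    exact (convex_Ioo (0:ℝ) 1).is_const_of_fderivWithin_eq_zero hdq hfd' hx hy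
  have hconst_neg : ∀ x ∈ Ioo (-1:ℝ) 0, ∀ y ∈ Ioo (-1:ℝ) 0,
      g₁ x / g₂ x = g₁ y / g₂ y := by
    intro x hx y hy
    have hdq : DifferentiableOn ℝ (fun y => g₁ y / g₂ y) (Ioo (-1:ℝ) 0) :=
      fun z hz => (hqd_neg z hz).differentiableAt.differentiableWithinAt
    have hfd' : ∀ z ∈ Ioo (-1:ℝ) 0,
        fderivWithin ℝ (fun y => g₁ y / g₂ y) (Ioo (-1:ℝ) 0) z = 0 := by
      intro z hz
      rw [fderivWithin_of_isOpen isOpen_Ioo hz, (hqd_neg z hz).hasFDerivAt.fderiv]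
      ext; simp
    exact (convex_Ioo (-1:ℝ) 0).is_const_of_fderivWithin_eq_zero hdq hfd' hx hy
  set kp : ℝ := g₁ (1/2) / g₂ (1/2) with hkp_def
  set km : ℝ := g₁ (-(1/2)) / g₂ (-(1/2)) with hkm_def
  have hhalf : (1/2 : ℝ) ∈ Ioo (0:ℝ) 1 := by norm_num
  have hnhalf : (-(1/2) : ℝ) ∈ Ioo (-1:ℝ) 0 := by norm_num
  have hkp : ∀ r ∈ Ioo (0:ℝ) 1, g₁ r = kp * g₂ r := by
    intro r hr
    have h := hconst_pos r hr (1/2) hhalf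
    have hne := key_pos r hr
    rw [hkp_def, ← h]
    field_simp
  have hkm : ∀ r ∈ Ioo (-1:ℝ) 0, g₁ r = km * g₂ r := by
    intro r hr
    have h := hconst_neg r hr (-(1/2)) hnhalf
    have hne := key_neg r hr
    rw [hkm_def, ← h]
    field_simp
  -- derivative matching at 0
  have hdp : deriv g₁ 0 = kp * deriv g₂ 0 := by
    have h1 : HasDerivWithinAt g₁ (deriv g₁ 0) (Ioi 0) 0 :=
      (hg₁ 0 h0I).hasDerivAt.hasDerivWithinAt
    have h2 : HasDerivWithinAt (fun x => kp * g₂ x) (kp * deriv g₂ 0) (Ioi 0) 0 :=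
      ((hg₂ 0 h0I).hasDerivAt.const_mul kp).hasDerivWithinAt
    have hev : g₁ =ᶠ[nhdsWithin (0:ℝ) (Ioi 0)] fun x => kp * g₂ x := by
      filter_upwards [Ioo_mem_nhdsGT_of_mem (⟨le_refl 0, one_pos⟩ : (0:ℝ) ∈ Ico (0:ℝ) 1)]
        with x hx
      exact hkp x hx
    have h3 : HasDerivWithinAt g₁ (kp * deriv g₂ 0) (Ioi 0) 0 :=
      h2.congr_of_eventuallyEq hev (by rw [hg10, hg20, mul_zero])
    rw [← h1.derivWithin (uniqueDiffWithinAt_Ioi 0),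
      h3.derivWithin (uniqueDiffWithinAt_Ioi 0)]
  have hdm : deriv g₁ 0 = km * deriv g₂ 0 := by
    have h1 : HasDerivWithinAt g₁ (deriv g₁ 0) (Iio 0) 0 :=
      (hg₁ 0 h0I).hasDerivAt.hasDerivWithinAt
    have h2 : HasDerivWithinAt (fun x => km * g₂ x) (km * deriv g₂ 0) (Iio 0) 0 :=
      ((hg₂ 0 h0I).hasDerivAt.const_mul km).hasDerivWithinAt
    have hev : g₁ =ᶠ[nhdsWithin (0:ℝ) (Iio 0)] fun x => km * g₂ x := by
      filter_upwards [Ioo_mem_nhdsLT_of_mem (⟨neg_one_lt_zero, le_refl 0⟩ :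
        (0:ℝ) ∈ Ioc (-1:ℝ) 0)] with x hx
      exact hkm x hx
    have h3 : HasDerivWithinAt g₁ (km * deriv g₂ 0) (Iio 0) 0 :=
      h2.congr_of_eventuallyEq hev (by rw [hg10, hg20, mul_zero])
    rw [← h1.derivWithin (uniqueDiffWithinAt_Iio 0),
      h3.derivWithin (uniqueDiffWithinAt_Iio 0)]
  have hk : km = kp := mul_right_cancel₀ hg₂0 (hdm.symm.trans hdp)
  refine ⟨kp, fun r hr => ?_⟩
  rcases lt_trichotomy r 0 with h | h | h
  · rw [← hk]; exact hkm r ⟨hr.1, h⟩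
  · rw [h, hg10, hg20, mul_zero]
  · exact hkp r ⟨h, hr.2⟩
end

section
/- There is no function A : ℝ → ℝ that is differentiable at every point of (−1,1) and satisfies A(r) − r·A'(r) = r for all r ∈ (−1,1). (The equation E₁ has no solutions: any solution would have to agree, up to a smooth function, with r·log r near 0, which is not even C¹.) -/
open Set Filter Real

/-- the equation `E₁` has no solutions: there is no function
`A : ℝ → ℝ`, differentiable at every point of `(-1, 1)`, with
`A(r) - r·A'(r) = r` on `(-1, 1)`. -/
theorem no_solution_E_one :
    ¬ ∃ A : ℝ → ℝ, (∀ r ∈ Ioo (-1 : ℝ) 1, DifferentiableAt ℝ A r) ∧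
      ∀ r ∈ Ioo (-1 : ℝ) 1, A r - r * deriv A r = r := by
  rintro ⟨A, hdiff, heq⟩
  have h0 : (0:ℝ) ∈ Ioo (-1:ℝ) 1 := by norm_num
  have hA0 : A 0 = 0 := by have := heq 0 h0; simpa using this
  set f : ℝ → ℝ := fun r => A r / r + Real.log r with hf
  have hderiv : ∀ x ∈ Ioo (0:ℝ) 1, HasDerivAt f 0 x := by
    intro x hx
    have hx0 : x ≠ 0 := ne_of_gt hx.1
    have hxI : x ∈ Ioo (-1:ℝ) 1 := ⟨by linarith [hx.1], hx.2⟩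
    have hA := (hdiff x hxI).hasDerivAt
    have h1 : HasDerivAt (fun r => A r / r)
        ((deriv A x * x - A x * 1) / x ^ 2) x := hA.div (hasDerivAt_id x) hx0
    have h2 : HasDerivAt Real.log x⁻¹ x := Real.hasDerivAt_log hx0
    have h3 := h1.add h2
    have hE := heq x hxI
    have : (deriv A x * x - A x * 1) / x ^ 2 + x⁻¹ = 0 := by
      have h4 : deriv A x * x - A x = -x := by linarith
      field_simp
      rw [h4]; ring
    rwa [this] at h3
  -- f is constant on Ioo 0 1
  have hconv : Convex ℝ (Ioo (0:ℝ) 1) := convex_Ioo 0 1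
  have hopen : IsOpen (Ioo (0:ℝ) 1) := isOpen_Ioo
  have hdiffOn : DifferentiableOn ℝ f (Ioo 0 1) :=
    fun x hx => ((hderiv x hx).differentiableAt).differentiableWithinAt
  have hfd0 : ∀ x ∈ Ioo (0:ℝ) 1, fderivWithin ℝ f (Ioo 0 1) x = 0 := by
    intro x hx
    rw [fderivWithin_of_isOpen hopen hx]
    have := ((hderiv x hx).hasFDerivAt).fderiv
    simp only [this]
    ext
    simp
  have hhalf : (1/2 : ℝ) ∈ Ioo (0:ℝ) 1 := by norm_num
  have hconst : ∀ x ∈ Ioo (0:ℝ) 1, f x = f (1/2) :=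
    fun x hx => hconv.is_const_of_fderivWithin_eq_zero hdiffOn hfd0 hx hhalf
  -- A r / r tends to deriv A 0 as r → 0⁺
  have hT1 : Tendsto (fun r => A r / r) (nhdsWithin 0 (Ioi 0)) (nhds (deriv A 0)) := by
    have h := ((hdiff 0 h0).hasDerivAt).tendsto_slope_zero
    have : Tendsto (fun r : ℝ => A r / r)
        (nhdsWithin 0 ({0}ᶜ : Set ℝ)) (nhds (deriv A 0)) := by
      refine h.congr' ?_
      filter_upwards [self_mem_nhdsWithin] with r hr
      simp [hA0, div_eq_inv_mul]
    exact this.mono_left (nhdsWithin_mono 0 (fun x hx => ne_of_gt hx))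
  -- but A r / r = f (1/2) - log r → +∞
  have hEv : (fun r => A r / r) =ᶠ[nhdsWithin 0 (Ioi 0)]
      (fun r => f (1/2) - Real.log r) := by
    filter_upwards [Ioo_mem_nhdsGT_of_mem (by norm_num : (0:ℝ) ∈ Ico (0:ℝ) 1)]
      with r hr
    have := hconst r hr
    simp only [hf] at this ⊢
    linarith
  have hT2 : Tendsto (fun r => A r / r) (nhdsWithin 0 (Ioi 0)) atTop := by
    rw [tendsto_congr' hEv]
    simp only [sub_eq_add_neg]
    exact tendsto_atTop_add_const_left _ _
      (tendsto_neg_atTop_iff.mpr Real.tendsto_log_nhdsGT_zero)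
  exact not_tendsto_atTop_of_tendsto_nhds hT1 hT2
end

section
/- Let f : ℝ → ℝ be smooth on (−1,1). Then there exists a unique constant c ∈ ℝ for which there is a function A : ℝ → ℝ, smooth on (−1,1), with f(r) = c·r + A(r) − r·A'(r) for all r ∈ (−1,1); moreover this unique c equals f'(0). (One-dimensional model of Proposition 4: every n-vector field f·Λ₀ on the collar U = (−1,1)×H is cohomologous to a unique linear one c·r·Λ₀, so that H²_Λ(U) ≅ ℝ with generator the linearization r·Λ₀.) -/
open Set

open Filter FormalMultilinearSeries

open Set Filter FormalMultilinearSeries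
set_option maxHeartbeats 1000000

/-- Auxiliary parametric integral `x ↦ ∫_{(0,1]} t^k h(t x) dt`. -/
noncomputable def linRepPhi (k : ℕ) (h : ℝ → ℝ) (x : ℝ) : ℝ :=
  MeasureTheory.integral (MeasureTheory.volume.restrict (Ioc (0:ℝ) 1)) (fun t => t^k * h (t*x))

open MeasureTheory in
lemma linRepPhi_hasDerivAt (k : ℕ) (h : ℝ → ℝ) (hh : ContDiffOn ℝ (⊤:ℕ∞) h (Ioo (-1:ℝ) 1))
    (x0 : ℝ) (hx0 : x0 ∈ Ioo (-1:ℝ) 1) :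
    HasDerivAt (linRepPhi k h) (linRepPhi (k+1) (deriv h) x0) x0 := by
  have hU : IsOpen (Ioo (-1:ℝ) 1) := isOpen_Ioo
  have hd := (contDiffOn_infty_iff_deriv_of_isOpen hU).1 hh
  have hmem : ∀ x ∈ Ioo (-1:ℝ) 1, ∀ t ∈ Icc (0:ℝ) 1, t * x ∈ Ioo (-1:ℝ) 1 := by
    intro x hx t ht
    have hxa : |x| < 1 := abs_lt.2 ⟨hx.1, hx.2⟩
    have : |t * x| < 1 := by
      rw [abs_mul, abs_of_nonneg ht.1]; nlinarith [abs_nonneg x, ht.2]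
    exact ⟨(abs_lt.1 this).1, (abs_lt.1 this).2⟩
  have hcont : ∀ (H : ℝ → ℝ), ContinuousOn H (Ioo (-1:ℝ) 1) → ∀ (j : ℕ),
      ∀ x ∈ Ioo (-1:ℝ) 1, ContinuousOn (fun t => t^j * H (t*x)) (Icc (0:ℝ) 1) := by
    intro H hH j x hx
    exact (continuousOn_pow j).mul
      (hH.comp (continuous_mul_right x).continuousOn (fun t ht => hmem x hx t ht))
  set R : ℝ := (|x0| + 1) / 2 with hR
  have hx0a : |x0| < 1 := abs_lt.2 ⟨hx0.1, hx0.2⟩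
  have hRx : |x0| < R := by rw [hR]; linarith
  have hs : Ioo (-R) R ∈ nhds x0 :=
    Ioo_mem_nhds (by linarith [neg_abs_le x0]) (by linarith [le_abs_self x0])
  have hIcc : Icc (-R) R ⊆ Ioo (-1:ℝ) 1 := fun y hy =>
    ⟨by linarith [hy.1], by linarith [hy.2]⟩
  obtain ⟨M, hM⟩ := isCompact_Icc.exists_bound_of_continuousOn (hd.2.continuousOn.mono hIcc)
  refine (hasDerivAt_integral_of_dominated_loc_of_deriv_le
    (μ := volume.restrict (Ioc (0:ℝ) 1))
    (F := fun x t => t^k * h (t*x)) (F' := fun x t => t^(k+1) * deriv h (t*x)) (x₀ := x0)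
    (bound := fun _ => M) hs ?_ ?_ ?_ ?_ ?_ ?_).2
  · filter_upwards [hU.mem_nhds hx0] with x hx
    exact ((hcont h hh.continuousOn k x hx).mono Ioc_subset_Icc_self).aestronglyMeasurable
      measurableSet_Ioc
  · exact ((hcont h hh.continuousOn k x0 hx0).integrableOn_Icc).mono_set Ioc_subset_Icc_self
  · exact ((hcont (deriv h) hd.2.continuousOn (k+1) x0 hx0).mono
      Ioc_subset_Icc_self).aestronglyMeasurable measurableSet_Ioc
  · filter_upwards [ae_restrict_mem measurableSet_Ioc] with t ht
    intro x hx
    have hxR : |x| < R := abs_lt.2 ⟨hx.1, hx.2⟩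
    have ht0 : 0 ≤ t := le_of_lt ht.1
    have htx : t * x ∈ Icc (-R) R := by
      have : |t*x| ≤ R := by
        rw [abs_mul, abs_of_nonneg ht0]; nlinarith [abs_nonneg x, ht.2]
      exact ⟨by linarith [neg_abs_le (t*x)], by linarith [le_abs_self (t*x)]⟩
    have h1 : ‖t^(k+1)‖ ≤ 1 := by
      rw [norm_pow, Real.norm_eq_abs, abs_of_nonneg ht0]; exact pow_le_one₀ ht0 ht.2
    calc ‖t^(k+1) * deriv h (t*x)‖ = ‖t^(k+1)‖ * ‖deriv h (t*x)‖ := norm_mul _ _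
      _ ≤ 1 * M := mul_le_mul h1 (hM _ htx) (norm_nonneg _) zero_le_one
      _ = M := one_mul M
  · exact (continuous_const.integrableOn_Icc).mono_set Ioc_subset_Icc_self
  · filter_upwards [ae_restrict_mem measurableSet_Ioc] with t ht
    intro x hx
    have htx : t * x ∈ Ioo (-1:ℝ) 1 :=
      hmem x (hIcc (Ioo_subset_Icc_self hx)) t (Ioc_subset_Icc_self ht)
    have hdiff : DifferentiableAt ℝ h (t*x) := hd.1.differentiableAt (hU.mem_nhds htx)
    have := (hdiff.hasDerivAt.comp x ((hasDerivAt_id' x).const_mul t)).const_mul (t^k)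
    have e : t^(k+1) * deriv h (t*x) = t^k * (deriv h (t*x) * (t*1)) := by ring
    rw [e]
    exact this

lemma linRepPhi_contDiffOn (n : ℕ) : ∀ (k : ℕ) (h : ℝ → ℝ),
    ContDiffOn ℝ (⊤:ℕ∞) h (Ioo (-1:ℝ) 1) → ContDiffOn ℝ n (linRepPhi k h) (Ioo (-1:ℝ) 1) := by
  induction n with
  | zero =>
    intro k h hh
    exact contDiffOn_zero.2
      (fun x hx => (linRepPhi_hasDerivAt k h hh x hx).continuousAt.continuousWithinAt)
  | succ n ih =>
    intro k h hh
    have hh' : ContDiffOn ℝ (⊤:ℕ∞) (deriv h) (Ioo (-1:ℝ) 1) :=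
      ((contDiffOn_infty_iff_deriv_of_isOpen isOpen_Ioo).1 hh).2
    rw [Nat.cast_succ, contDiffOn_succ_iff_deriv_of_isOpen isOpen_Ioo]
    refine ⟨fun x hx => (linRepPhi_hasDerivAt k h hh x hx).differentiableAt.differentiableWithinAt,
      by simp, ?_⟩
    exact (ih (k+1) (deriv h) hh').congr (fun x hx => (linRepPhi_hasDerivAt k h hh x hx).deriv)

/-- The difference quotient of a smooth function is smooth. -/
lemma contDiffOn_dslope' {g : ℝ → ℝ} (hg : ContDiffOn ℝ (⊤:ℕ∞) g (Ioo (-1:ℝ) 1)) :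
    ContDiffOn ℝ (⊤:ℕ∞) (dslope g 0) (Ioo (-1:ℝ) 1) := by
  have h0 : (0:ℝ) ∈ Ioo (-1:ℝ) 1 := by norm_num
  have hg' := (contDiffOn_infty_iff_deriv_of_isOpen isOpen_Ioo).1 hg
  have hs : ContDiffOn ℝ (⊤:ℕ∞) (linRepPhi 0 (deriv g)) (Ioo (-1:ℝ) 1) :=
    contDiffOn_infty.2 (fun n => linRepPhi_contDiffOn n 0 _ hg'.2)
  refine hs.congr ?_
  intro x hx
  have hsub := (ordConnected_Ioo (a := (-1:ℝ)) (b := 1)).uIcc_subset h0 hx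
  by_cases hx0 : x = 0
  · subst hx0
    simp [linRepPhi, dslope_same]
  · rw [dslope_of_ne _ hx0, slope_def_field, linRepPhi, ← intervalIntegral.integral_of_le zero_le_one]
    simp only [pow_zero, one_mul]
    rw [intervalIntegral.integral_comp_mul_right (deriv g) hx0, zero_mul, one_mul,
      intervalIntegral.integral_eq_sub_of_hasDerivAt (f := g)]
    · rw [sub_zero, smul_eq_mul]
      field_simp
    · intro y hy
      exact (hg'.1.differentiableAt (isOpen_Ioo.mem_nhds (hsub hy))).hasDerivAt
    · exact (hg'.2.continuousOn.mono hsub).intervalIntegrable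

/-- one-dimensional model of Proposition 4, `H²_Λ(U) ≅ ℝ`: for `f`
smooth on `(-1, 1)`, a constant `c` admits a function `A`, smooth on `(-1, 1)`, with
`f(r) = c·r + A(r) - r·A'(r)` on `(-1, 1)` if and only if `c = f'(0)`; in particular
such a `c` exists and is unique. -/
theorem unique_linear_representative (f : ℝ → ℝ)
    (hf : ContDiffOn ℝ (⊤ : ℕ∞) f (Ioo (-1) 1)) :
    ∀ c : ℝ,
      ((∃ A : ℝ → ℝ, ContDiffOn ℝ (⊤ : ℕ∞) A (Ioo (-1) 1) ∧
          ∀ r ∈ Ioo (-1 : ℝ) 1, f r = c * r + (A r - r * deriv A r)) ↔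
        c = deriv f 0) := by
  have hU : IsOpen (Ioo (-1:ℝ) 1) := isOpen_Ioo
  have h0 : (0:ℝ) ∈ Ioo (-1:ℝ) 1 := by norm_num
  have hfa : ContDiffOn ℝ (⊤ : ℕ∞) f (Ioo (-1) 1) :=
    hf
  intro c
  constructor
  · rintro ⟨A, hA, hEq⟩
    have hAa : DifferentiableOn ℝ A (Ioo (-1) 1) :=
      hA.differentiableOn (by simp)
    have hdA : ContDiffOn ℝ 1 (deriv A) (Ioo (-1) 1) := hA.deriv_of_isOpen hU (WithTop.coe_le_coe.2 le_top)
    have hdA0 : DifferentiableAt ℝ (deriv A) 0 :=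
      (hdA.contDiffAt (hU.mem_nhds h0)).differentiableAt one_ne_zero
    have hA0 : DifferentiableAt ℝ A 0 := hAa.differentiableAt (hU.mem_nhds h0)
    have hF : HasDerivAt (fun r => c * r + (A r - r * deriv A r))
        (c * 1 + (deriv A 0 - (1 * deriv A 0 + 0 * deriv (deriv A) 0))) 0 := by
      have h1 : HasDerivAt (fun r : ℝ => c * r) (c * 1) 0 := (hasDerivAt_id 0).const_mul c
      have h2 : HasDerivAt (fun r : ℝ => r * deriv A r)
          (1 * deriv A 0 + 0 * deriv (deriv A) 0) 0 := by
        exact (hasDerivAt_id' (x := 0)).mul hdA0.hasDerivAt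
      exact h1.add (hA0.hasDerivAt.sub h2)
    have hev : f =ᶠ[nhds 0] fun r => c * r + (A r - r * deriv A r) :=
      eventually_of_mem (hU.mem_nhds h0) hEq
    rw [hev.deriv_eq, hF.deriv]; ring
  · intro hc
    set g : ℝ → ℝ := fun t => f t - f 0 - c * t with hg
    have hga : ContDiffOn ℝ (⊤ : ℕ∞) g (Ioo (-1) 1) :=
      (hfa.sub contDiffOn_const).sub (contDiffOn_const.mul contDiffOn_id)
    have hg0 : g 0 = 0 := by simp [hg]
    have hdg0 : deriv g 0 = 0 := by
      have df : HasDerivAt f (deriv f 0) 0 := ((hfa.differentiableOn (by simp)).differentiableAt (hU.mem_nhds h0)).hasDerivAt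
      have hgd : HasDerivAt g (deriv f 0 - c * 1) 0 :=
        (df.sub_const (f 0)).sub ((hasDerivAt_id 0).const_mul c)
      rw [hgd.deriv, hc]; ring
    set φ : ℝ → ℝ := dslope (dslope g 0) 0 with hφ
    have hφa : ContDiffOn ℝ (⊤ : ℕ∞) φ (Ioo (-1) 1) :=
      contDiffOn_dslope' (contDiffOn_dslope' hga)
    have hφcOn : ContinuousOn φ (Ioo (-1:ℝ) 1) :=
      hφa.continuousOn
    have hkey : ∀ r ∈ Ioo (-1:ℝ) 1, g r = r^2 * φ r := by
      intro r hr
      by_cases hr0 : r = 0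
      · subst hr0; simp [hg0]
      · rw [hφ, dslope_of_ne _ hr0, slope_def_field, dslope_same,
          dslope_of_ne _ hr0, slope_def_field, hdg0, hg0]
        field_simp
        ring
    set I : ℝ → ℝ := fun r => ∫ t in (0:ℝ)..r, φ t with hI
    have hId : ∀ r ∈ Ioo (-1:ℝ) 1, HasDerivAt I (φ r) r := by
      intro r hr
      apply intervalIntegral.integral_hasDerivAt_right
      · apply ContinuousOn.intervalIntegrable
        exact hφcOn.mono ((ordConnected_Ioo (a := (-1:ℝ)) (b := 1)).uIcc_subset h0 hr)
      · exact ⟨Ioo (-1) 1, hU.mem_nhds hr,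
          hφcOn.aestronglyMeasurable hU.measurableSet⟩
      · exact hφcOn.continuousAt (hU.mem_nhds hr)
    have hIa : ContDiffOn ℝ (⊤ : ℕ∞) I (Ioo (-1) 1) :=
      (contDiffOn_infty_iff_deriv_of_isOpen hU).2
        ⟨fun x hx => (hId x hx).differentiableAt.differentiableWithinAt,
          hφa.congr (fun x hx => (hId x hx).deriv)⟩
    refine ⟨fun r => f 0 - r * I r, ?_, ?_⟩
    · have hAna : ContDiffOn ℝ (⊤ : ℕ∞) (fun r => f 0 - r * I r) (Ioo (-1) 1) :=
        contDiffOn_const.sub (contDiffOn_id.mul hIa)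
      exact hAna
    · intro r hr
      have hAd : HasDerivAt (fun r => f 0 - r * I r) (0 - (1 * I r + r * φ r)) r := by
        apply HasDerivAt.sub (hasDerivAt_const r (f 0))
        exact (hasDerivAt_id' (x := r)).mul (hId r hr)
      rw [hAd.deriv]
      have h2 : f r - f 0 - c * r = r^2 * φ r := hkey r hr
      simp only
      linear_combination h2
end

section
/- Let φ : ℝ → ℝ be continuously differentiable on [−1,1], and let h : ℝ → ℝ be continuously differentiable on [−1,1] with h(0) = 0, h'(0) ≠ 0, and h(r) ≠ 0 for all r ∈ [−1,1] with r ≠ 0. Then the limit as ε → 0⁺ of ∫_{{r ∈ [−1,1] : |h(r)| ≥ ε}} φ(r)/r dr exists and equals the limit as ε → 0⁺ of ∫_{{r ∈ [−1,1] : |r| ≥ ε}} φ(r)/r dr. (The regularized integral does not depend on the choice of the cutoff function h vanishing linearly at 0.) -/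
/-!
Split `φ r / r = g r + φ 0 / r` with `g = dslope φ 0`, which is continuous on `[-1, 1]`.
For any cutoff, the `g`-part converges to `∫_{[-1,1]} g` by dominated convergence.
For the `φ 0 / r`-part, once `ε` is small the cutoff region is `[-1, a] ∪ [b, 1]` with
`h a = -ε`, `h b = ε`, so it contributes `φ 0 * log (-a / b)`; and
`-a / b = (h b / b) / (h a / a) → h'(0) / h'(0) = 1`. Hence both regularized integrals tend
to `∫_{[-1,1]} (φ r - φ 0) / r dr`.
-/

open Set MeasureTheory Filter Topology

theorem IsClosed.setOf_mem_and_le_abs {X : Type*} [TopologicalSpace X] {s : Set X} {u : X → ℝ}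
    (hs : IsClosed s) (hu : ContinuousOn u s) (ε : ℝ) :
    IsClosed {x | x ∈ s ∧ ε ≤ |u x|} :=
  hu.abs.preimage_isClosed_of_isClosed hs isClosed_Ici

theorem tendsto_setIntegral_setOf_le_abs {X E : Type*} [TopologicalSpace X] [MeasurableSpace X]
    [OpensMeasurableSpace X] [NormedAddCommGroup E] [NormedSpace ℝ E] {μ : Measure X}
    {s : Set X} {f : X → E} {u : X → ℝ} (hs : IsClosed s) (hu : ContinuousOn u s)
    (hf : IntegrableOn f s μ) (hu0 : ∀ᵐ x ∂μ.restrict s, u x ≠ 0) :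
    Tendsto (fun ε => ∫ x in {x | x ∈ s ∧ ε ≤ |u x|}, f x ∂μ) (𝓝[>] 0)
      (𝓝 (∫ x in s, f x ∂μ)) := by
  have hmeas ε : MeasurableSet {x | x ∈ s ∧ ε ≤ |u x|} :=
    (hs.setOf_mem_and_le_abs hu ε).measurableSet
  simp_rw [← integral_indicator (hmeas _), ← integral_indicator hs.measurableSet]
  refine tendsto_integral_filter_of_dominated_convergence (fun x => ‖s.indicator f x‖)
    (.of_forall fun ε => ((hf.mono_set fun x hx => hx.1).integrable_indicator
      (hmeas ε)).aestronglyMeasurable)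
    (.of_forall fun ε => .of_forall fun x => ?_) (hf.integrable_indicator hs.measurableSet).norm
    ?_
  · by_cases hx : x ∈ {x | x ∈ s ∧ ε ≤ |u x|}
    · simp [indicator_of_mem hx, indicator_of_mem hx.1]
    · simp [indicator_of_notMem hx]
  · filter_upwards [(ae_restrict_iff' hs.measurableSet).1 hu0] with x hx
    by_cases hxs : x ∈ s
    · have hpos : 0 < |u x| := abs_pos.2 (hx hxs)
      refine tendsto_const_nhds.congr' ?_
      filter_upwards [Ioo_mem_nhdsGT hpos] with ε hε
      have hxε : x ∈ {x | x ∈ s ∧ ε ≤ |u x|} := ⟨hxs, hε.2.le⟩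
      rw [indicator_of_mem hxs, indicator_of_mem hxε]
    · have hxε ε : x ∉ {x | x ∈ s ∧ ε ≤ |u x|} := fun h => hxs h.1
      simp [indicator_of_notMem hxs, indicator_of_notMem (hxε _)]

theorem div_eq_dslope_add_mul_inv (φ : ℝ → ℝ) {r : ℝ} (hr : r ≠ 0) :
    φ r / r = dslope φ 0 r + φ 0 * r⁻¹ := by
  rw [dslope_of_ne _ hr, slope_def_field]
  field_simp
  ring

theorem integral_inv_Icc_union_Icc {a b c : ℝ} (hca : -c ≤ a) (ha : a < 0) (hb : 0 < b)
    (hbc : b ≤ c) : ∫ r in Icc (-c) a ∪ Icc b c, r⁻¹ = Real.log (-a / b) := by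
  have hc : 0 < c := hb.trans_le hbc
  have hint {x y : ℝ} (h : (0 : ℝ) ∉ Icc x y) : IntegrableOn (fun r : ℝ => r⁻¹) (Icc x y) :=
    (continuousOn_inv₀.mono fun r hr (h0 : r = 0) => h (h0 ▸ hr)).integrableOn_Icc
  rw [setIntegral_union (disjoint_left.2 fun r h1 h2 => by linarith [h1.2, h2.1])
      measurableSet_Icc (hint fun h => by linarith [h.2]) (hint fun h => by linarith [h.1]),
    integral_Icc_eq_integral_Ioc, ← intervalIntegral.integral_of_le hca,
    integral_inv_of_neg (by linarith) ha, integral_Icc_eq_integral_Ioc,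
    ← intervalIntegral.integral_of_le hbc, integral_inv_of_pos hb hc,
    ← Real.log_mul (div_ne_zero ha.ne (by linarith)) (by positivity)]
  congr 1
  field_simp

theorem StrictMonoOn.le_abs_iff {α : Type*} [LinearOrder α] {h : α → ℝ} {s : Set α}
    (hh : StrictMonoOn h s) {a b r : α} {ε : ℝ} (ha : a ∈ s) (hb : b ∈ s) (hr : r ∈ s)
    (hha : h a = -ε) (hhb : h b = ε) : ε ≤ |h r| ↔ r ≤ a ∨ b ≤ r := by
  rw [le_abs', ← hha, ← hhb, hh.le_iff_le hr ha, hh.le_iff_le hb hr]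

theorem setOf_le_abs_eq_Icc_union_Icc {h : ℝ → ℝ} {δ a b ε : ℝ} (hδ1 : δ ≤ 1)
    (hmono : StrictMonoOn h (Icc (-δ) δ)) (ha : a ∈ Ioo (-δ) 0) (hb : b ∈ Ioo 0 δ)
    (hha : h a = -ε) (hhb : h b = ε) (hout : ∀ r ∈ Icc (-1 : ℝ) 1 \ Ioo (-δ) δ, ε ≤ |h r|) :
    {r | r ∈ Icc (-1 : ℝ) 1 ∧ ε ≤ |h r|} = Icc (-1) a ∪ Icc b 1 := by
  obtain ⟨ha₁, ha₂⟩ := ha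
  obtain ⟨hb₁, hb₂⟩ := hb
  ext r
  by_cases hr : r ∈ Icc (-δ) δ
  · rw [mem_ofPred_eq,
      hmono.le_abs_iff ⟨ha₁.le, by linarith⟩ ⟨by linarith, hb₂.le⟩ hr hha hhb]
    simp only [mem_Icc, mem_union] at hr ⊢
    grind
  · have hout' := hout r
    simp only [mem_Icc, mem_union, Set.mem_sdiff, mem_Ioo, mem_ofPred_eq] at hr hout' ⊢
    grind

theorem exists_setOf_le_abs_eq_Icc_union_Icc {h : ℝ → ℝ} {δ : ℝ}
    (hh : ContinuousOn h (Icc (-1) 1)) (hh0 : h 0 = 0)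
    (hhne : ∀ r ∈ Icc (-1 : ℝ) 1, r ≠ 0 → h r ≠ 0) (hδ : 0 < δ) (hδ1 : δ ≤ 1)
    (hmono : StrictMonoOn h (Icc (-δ) δ)) :
    ∃ a b : ℝ → ℝ, ∀ᶠ ε in 𝓝[>] 0, a ε ∈ Ioo (-δ) 0 ∧ b ε ∈ Ioo 0 δ ∧
      h (a ε) = -ε ∧ h (b ε) = ε ∧
      {r | r ∈ Icc (-1 : ℝ) 1 ∧ ε ≤ |h r|} = Icc (-1) (a ε) ∪ Icc (b ε) 1 := by
  have hhδ : 0 < h δ := hh0 ▸ hmono ⟨by linarith, hδ.le⟩ ⟨by linarith, le_rfl⟩ hδ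
  have hhnδ : h (-δ) < 0 := hh0 ▸ hmono ⟨le_rfl, by linarith⟩ ⟨by linarith, hδ.le⟩ (by linarith)
  -- `|h| ≥ m > 0` on `[-1, 1] \ (-δ, δ)`
  obtain ⟨m, hm, hmK⟩ := (isCompact_Icc.diff (isOpen_Ioo (a := -δ) (b := δ))).exists_forall_le'
    (hh.mono sdiff_subset).abs (a := 0) fun r hr =>
      abs_pos.2 (hhne r hr.1 fun h0 => hr.2 (by rw [h0]; exact ⟨by linarith, hδ⟩))
  have key : ∀ ε ∈ Ioo 0 (min m (min (h δ) (-h (-δ)))), ∃ a b, a ∈ Ioo (-δ) 0 ∧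
      b ∈ Ioo 0 δ ∧ h a = -ε ∧ h b = ε ∧
      {r | r ∈ Icc (-1 : ℝ) 1 ∧ ε ≤ |h r|} = Icc (-1) a ∪ Icc b 1 := by
    rintro ε ⟨hε, hεm⟩
    simp only [lt_min_iff] at hεm
    obtain ⟨b, hb, hhb⟩ := intermediate_value_Ioo hδ.le
      (hh.mono (Icc_subset_Icc (by linarith) hδ1)) (by rw [hh0]; exact ⟨hε, hεm.2.1⟩)
    obtain ⟨a, ha, hha⟩ := intermediate_value_Ioo (neg_nonpos.2 hδ.le)
      (hh.mono (Icc_subset_Icc (by linarith) zero_le_one))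
      (by rw [hh0]; constructor <;> linarith : -ε ∈ Ioo (h (-δ)) (h 0))
    exact ⟨a, b, ha, hb, hha, hhb, setOf_le_abs_eq_Icc_union_Icc hδ1 hmono ha hb hha hhb
      fun r hr => hεm.1.le.trans (hmK r hr)⟩
  choose! a b hab using key
  exact ⟨a, b, eventually_of_mem (Ioo_mem_nhdsGT (lt_min hm (lt_min hhδ (by linarith)))) hab⟩

theorem eventually_monotoneOn_sub_mul {h : ℝ → ℝ} {s : Set ℝ} {c : ℝ} (hs : s ∈ 𝓝 0)
    (hh : ContDiffOn ℝ 1 h s) (hc : c < deriv h 0) :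
    ∀ᶠ δ in 𝓝[>] 0, MonotoneOn (fun x => h x - c * x) (Icc (-δ) δ) := by
  have hint : ∀ᶠ x in 𝓝 0, x ∈ interior s := interior_mem_nhds.2 hs
  have hcont : ContinuousAt (deriv h) 0 :=
    ((hh.mono interior_subset).continuousOn_deriv_of_isOpen isOpen_interior le_rfl).continuousAt
      hint
  obtain ⟨η, hη, hball⟩ := Metric.eventually_nhds_iff_ball.1
    (hint.and (hcont.eventually (eventually_gt_nhds hc)))
  filter_upwards [Ioo_mem_nhdsGT hη] with δ hδ
  have hsub : Icc (-δ) δ ⊆ Metric.ball 0 η := fun x hx => by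
    rw [Metric.mem_ball, Real.dist_0_eq_abs]
    exact (abs_le.2 hx).trans_lt hδ.2
  have hsubs : Icc (-δ) δ ⊆ s := fun x hx => interior_subset (hball x (hsub hx)).1
  intro x hx y hy hxy
  have := (convex_Icc (-δ) δ).mul_sub_le_image_sub_of_le_deriv (hh.continuousOn.mono hsubs)
    ((hh.differentiableOn one_ne_zero).mono (interior_subset.trans hsubs))
    (fun z hz => (hball z (hsub (interior_subset hz))).2.le) x hx y hy hxy
  dsimp only
  linarith

theorem mul_abs_le_abs_of_monotoneOn_sub_mul {h : ℝ → ℝ} {c δ x : ℝ}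
    (hmono : MonotoneOn (fun x => h x - c * x) (Icc (-δ) δ)) (hh0 : h 0 = 0)
    (hx : x ∈ Icc (-δ) δ) : c * |x| ≤ |h x| := by
  have h0mem : (0 : ℝ) ∈ Icc (-δ) δ := ⟨by linarith [hx.1, hx.2], by linarith [hx.1, hx.2]⟩
  rcases le_total 0 x with hx0 | hx0
  · have := hmono h0mem hx hx0
    simp only [hh0, mul_zero, sub_zero] at this
    rw [abs_of_nonneg hx0]
    exact (sub_nonneg.1 this).trans (le_abs_self _)
  · have := hmono hx h0mem hx0
    simp only [hh0, mul_zero, sub_zero] at this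
    rw [abs_of_nonpos hx0]
    linarith [neg_abs_le (h x)]

theorem tendsto_nhdsNE_zero_of_abs_le {ι : Type*} {l : Filter ι} {f g : ι → ℝ}
    (hg : Tendsto g l (𝓝 0)) (hf : ∀ᶠ x in l, f x ≠ 0 ∧ |f x| ≤ g x) :
    Tendsto f l (𝓝[≠] 0) :=
  tendsto_nhdsWithin_iff.2
    ⟨squeeze_zero_norm' (hf.mono fun _ hx => hx.2) hg, hf.mono fun _ hx => hx.1⟩

theorem tendsto_neg_div_of_hasDerivAt {ι : Type*} {l : Filter ι} {h : ℝ → ℝ} {d : ℝ}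
    {a b : ι → ℝ} (hd : HasDerivAt h d 0) (hd0 : d ≠ 0) (hh0 : h 0 = 0)
    (ha : Tendsto a l (𝓝[≠] 0)) (hb : Tendsto b l (𝓝[≠] 0))
    (hab : ∀ᶠ x in l, h (a x) = -h (b x)) :
    Tendsto (fun x => -a x / b x) l (𝓝 1) := by
  have hslope : Tendsto (fun x => h x / x) (𝓝[≠] 0) (𝓝 d) := by
    refine (hasDerivAt_iff_tendsto_slope.1 hd).congr fun x => ?_
    rw [slope_def_field, hh0, sub_zero, sub_zero]
  have hlim := (hslope.comp hb).div (hslope.comp ha) hd0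
  rw [div_self hd0] at hlim
  refine hlim.congr' ?_
  filter_upwards [hab, ha.eventually self_mem_nhdsWithin, hb.eventually self_mem_nhdsWithin,
    (hslope.comp hb).eventually_ne hd0] with x hx (hax : a x ≠ 0) (hbx : b x ≠ 0) hqb
  have hhb : h (b x) ≠ 0 := fun h0 => hqb (by simp [h0])
  simp only [Pi.div_apply, Function.comp_apply, hx]
  field_simp

theorem tendsto_setIntegral_inv_setOf_le_abs_of_deriv_pos {h : ℝ → ℝ}
    (hh : ContDiffOn ℝ 1 h (Icc (-1) 1)) (hh0 : h 0 = 0) (hpos : 0 < deriv h 0)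
    (hhne : ∀ r ∈ Icc (-1 : ℝ) 1, r ≠ 0 → h r ≠ 0) :
    Tendsto (fun ε => ∫ r in {r | r ∈ Icc (-1 : ℝ) 1 ∧ ε ≤ |h r|}, r⁻¹) (𝓝[>] 0) (𝓝 0) := by
  obtain ⟨c, hc, hcd⟩ : ∃ c, 0 < c ∧ c < deriv h 0 := ⟨_, half_pos hpos, half_lt_self hpos⟩
  have hIcc : Icc (-1 : ℝ) 1 ∈ 𝓝 0 := Icc_mem_nhds (by norm_num) (by norm_num)
  obtain ⟨δ, hmono, hδ⟩ := ((eventually_monotoneOn_sub_mul hIcc hh hcd).and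
    (Ioo_mem_nhdsGT one_pos)).exists
  have hstrict : StrictMonoOn h (Icc (-δ) δ) := fun x hx y hy hxy => by
    have := hmono hx hy hxy.le
    dsimp only at this
    linarith [mul_lt_mul_of_pos_left hxy hc]
  obtain ⟨a, b, hab⟩ := exists_setOf_le_abs_eq_Icc_union_Icc hh.continuousOn hh0 hhne hδ.1
    hδ.2.le hstrict
  have hsmall : ∀ᶠ ε in 𝓝[>] 0, (a ε ≠ 0 ∧ |a ε| ≤ ε / c) ∧ (b ε ≠ 0 ∧ |b ε| ≤ ε / c) := by
    filter_upwards [hab, self_mem_nhdsWithin] with ε ⟨ha, hb, hha, hhb, _⟩ (hε : 0 < ε)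
    have hle {x : ℝ} (hx : x ∈ Icc (-δ) δ) (hhx : |h x| = ε) : |x| ≤ ε / c :=
      (le_div_iff₀' hc).2 (hhx ▸ mul_abs_le_abs_of_monotoneOn_sub_mul hmono hh0 hx)
    exact ⟨⟨ha.2.ne, hle ⟨ha.1.le, by linarith [ha.2]⟩ (by rw [hha, abs_neg, abs_of_pos hε])⟩,
      ⟨hb.1.ne', hle ⟨by linarith [hb.1], hb.2.le⟩ (by rw [hhb, abs_of_pos hε])⟩⟩
  have hlin : Tendsto (fun ε : ℝ => ε / c) (𝓝[>] 0) (𝓝 0) := by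
    simpa using ((continuous_id.div_const c).tendsto 0).mono_left nhdsWithin_le_nhds
  have hratio := tendsto_neg_div_of_hasDerivAt
    ((hh.differentiableOn one_ne_zero).differentiableAt hIcc).hasDerivAt hpos.ne' hh0
    (tendsto_nhdsNE_zero_of_abs_le hlin (hsmall.mono fun _ h => h.1))
    (tendsto_nhdsNE_zero_of_abs_le hlin (hsmall.mono fun _ h => h.2))
    (hab.mono fun ε ⟨_, _, hha, hhb, _⟩ => by rw [hha, hhb])
  have hlog := (Real.continuousAt_log one_ne_zero).tendsto.comp hratio
  rw [Real.log_one] at hlog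
  refine hlog.congr' (hab.mono fun ε ⟨ha, hb, _, _, hS⟩ => ?_)
  simp only [Function.comp_apply]
  rw [hS, integral_inv_Icc_union_Icc (by linarith [ha.1, hδ.2]) ha.2 hb.1
    (by linarith [hb.2, hδ.2])]

theorem tendsto_setIntegral_inv_setOf_le_abs {h : ℝ → ℝ}
    (hh : ContDiffOn ℝ 1 h (Icc (-1) 1)) (hh0 : h 0 = 0) (hh'0 : deriv h 0 ≠ 0)
    (hhne : ∀ r ∈ Icc (-1 : ℝ) 1, r ≠ 0 → h r ≠ 0) :
    Tendsto (fun ε => ∫ r in {r | r ∈ Icc (-1 : ℝ) 1 ∧ ε ≤ |h r|}, r⁻¹) (𝓝[>] 0) (𝓝 0) := by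
  rcases hh'0.lt_or_gt with hneg | hpos
  · simpa only [Pi.neg_apply, abs_neg] using
      tendsto_setIntegral_inv_setOf_le_abs_of_deriv_pos hh.neg (by simp [hh0])
        (by rw [deriv.fun_neg]; linarith) fun r hr hr0 => neg_ne_zero.2 (hhne r hr hr0)
  · exact tendsto_setIntegral_inv_setOf_le_abs_of_deriv_pos hh hh0 hpos hhne

theorem tendsto_setIntegral_div_setOf_le_abs {φ h : ℝ → ℝ}
    (hφ : ContinuousOn φ (Icc (-1) 1)) (hφ0 : DifferentiableAt ℝ φ 0)
    (hh : ContDiffOn ℝ 1 h (Icc (-1) 1)) (hh0 : h 0 = 0) (hh'0 : deriv h 0 ≠ 0)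
    (hhne : ∀ r ∈ Icc (-1 : ℝ) 1, r ≠ 0 → h r ≠ 0) :
    Tendsto (fun ε => ∫ r in {r | r ∈ Icc (-1 : ℝ) 1 ∧ ε ≤ |h r|}, φ r / r) (𝓝[>] 0)
      (𝓝 (∫ r in Icc (-1 : ℝ) 1, dslope φ 0 r)) := by
  have hg : IntegrableOn (dslope φ 0) (Icc (-1) 1) :=
    ((continuousOn_dslope (Icc_mem_nhds (by norm_num) (by norm_num))).2
      ⟨hφ, hφ0⟩).integrableOn_Icc
  have hhne' : ∀ᵐ r ∂volume.restrict (Icc (-1 : ℝ) 1), h r ≠ 0 :=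
    (ae_restrict_iff' measurableSet_Icc).2 <| by
      filter_upwards [Measure.ae_ne volume 0] with r hr hrI using hhne r hrI hr
  have hlim := (tendsto_setIntegral_setOf_le_abs isClosed_Icc hh.continuousOn hg hhne').add
    ((tendsto_setIntegral_inv_setOf_le_abs hh hh0 hh'0 hhne).const_mul (φ 0))
  rw [mul_zero, add_zero] at hlim
  refine hlim.congr' ?_
  filter_upwards [self_mem_nhdsWithin] with ε (hε : 0 < ε)
  set S := {r | r ∈ Icc (-1 : ℝ) 1 ∧ ε ≤ |h r|}
  have hS : IsClosed S := isClosed_Icc.setOf_mem_and_le_abs hh.continuousOn ε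
  have hS0 : ∀ r ∈ S, r ≠ 0 := fun r hr h0 => hε.not_ge (by simpa [h0, hh0] using hr.2)
  have hinv : IntegrableOn (·⁻¹) S := (continuousOn_inv₀.mono hS0).integrableOn_compact
    (isCompact_Icc.of_isClosed_subset hS fun r hr => hr.1)
  rw [← integral_const_mul, ← integral_add (hg.mono_set fun r hr => hr.1) (hinv.const_mul _)]
  exact setIntegral_congr_fun hS.measurableSet fun r hr =>
    (div_eq_dslope_add_mul_inv φ (hS0 r hr)).symm

/-- independence of the regularized volume on the cutoff function:
for `φ` continuously differentiable on `[-1, 1]` and `h` continuously differentiable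
on `[-1, 1]` with `h(0) = 0`, `h'(0) ≠ 0`, and `h` nonzero away from `0`, the limits
as `ε → 0⁺` of `∫_{ {|h(r)| ≥ ε} } φ(r)/r dr` and of `∫_{ {|r| ≥ ε} } φ(r)/r dr`
both exist and are equal. -/
theorem regularized_integral_independent_of_cutoff (φ h : ℝ → ℝ)
    (hφ : ContDiffOn ℝ 1 φ (Icc (-1) 1))
    (hh : ContDiffOn ℝ 1 h (Icc (-1) 1))
    (hh0 : h 0 = 0) (hh'0 : deriv h 0 ≠ 0)
    (hhne : ∀ r ∈ Icc (-1 : ℝ) 1, r ≠ 0 → h r ≠ 0) :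
    ∃ L : ℝ,
      Tendsto (fun ε : ℝ => ∫ r in {r : ℝ | r ∈ Icc (-1 : ℝ) 1 ∧ ε ≤ |h r|}, φ r / r)
        (nhdsWithin 0 (Ioi 0)) (nhds L) ∧
      Tendsto (fun ε : ℝ => ∫ r in {r : ℝ | r ∈ Icc (-1 : ℝ) 1 ∧ ε ≤ |r|}, φ r / r)
        (nhdsWithin 0 (Ioi 0)) (nhds L) := by
  have hφ0 : DifferentiableAt ℝ φ 0 := (hφ.differentiableOn one_ne_zero).differentiableAt
    (Icc_mem_nhds (by norm_num) (by norm_num))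
  exact ⟨_, tendsto_setIntegral_div_setOf_le_abs hφ.continuousOn hφ0 hh hh0 hh'0 hhne,
    tendsto_setIntegral_div_setOf_le_abs (h := id) hφ.continuousOn hφ0 contDiffOn_id rfl
      (by simp) fun _ _ => id⟩
end
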